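/- arXiv:0906.4701 — 9 statements merged into one kernel-verified Lean document; each statement's English description precedes it below -/
import Mathlib

section
/- Let 1 < p ≤ 2 and q = -p. Then J_q = [q/(q²-1), 1/(q²-1)] = [-p/(p²-1), 1/(p²-1)]; i.e., every real x in this interval has an expansion in base q with digits {0,1}, and no other real does. -/
def IsExpansionR (q x : ℝ) (c : ℕ → ℕ) : Prop :=
  (∀ k, c k ≤ 1) ∧ HasSum (fun k : ℕ => (c (k + 1) : ℝ) / q ^ (k + 1)) x

def JR (q : ℝ) : Set ℝ := {x | ∃ c, IsExpansionR q x c}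

/-! Write `I = [a, b]` with `a = q / (q² - 1)` and `b = 1 / (q² - 1)`. Since `q < 0`, the term
`c_k q^{-k}` lies between `min 0 q^{-k}` and `max 0 q^{-k}`, whose sums over `k ≥ 1` are `a` and `b`;
hence `J_q ⊆ I`. Conversely `q • I = [a, b + 1]`, which is covered by `I ∪ (I + 1)` because
`a + 1 ≤ b` for `-2 ≤ q`. So every `y ∈ I` has a digit `d ∈ {0, 1}` with `q y - d ∈ I`, and
iterating `y ↦ q y - d` yields an expansion: the orbit stays bounded, so the remainder
`q^{-n} y_n` tends to zero. -/

open Finset Filter Topology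

lemma half_sub_abs_le_mul {c t : ℝ} (hc : c ∈ Set.Icc 0 1) : (t - |t|) / 2 ≤ c * t := by
  cases abs_cases t <;> nlinarith [hc.1, hc.2]

lemma mul_le_half_add_abs {c t : ℝ} (hc : c ∈ Set.Icc 0 1) : c * t ≤ (t + |t|) / 2 := by
  cases abs_cases t <;> nlinarith [hc.1, hc.2]

lemma hasSum_pow_succ {r : ℝ} (hr : |r| < 1) : HasSum (fun k : ℕ => r ^ (k + 1)) (r / (1 - r)) := by
  simpa [pow_succ', div_eq_mul_inv] using (hasSum_geometric_of_abs_lt_one hr).mul_left r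

theorem mem_Icc_of_hasSum_mul_pow_succ {r x : ℝ} (hr : |r| < 1) {c : ℕ → ℝ}
    (hc : ∀ k, c k ∈ Set.Icc 0 1) (hx : HasSum (fun k => c k * r ^ (k + 1)) x) :
    x ∈ Set.Icc ((r / (1 - r) - |r| / (1 - |r|)) / 2) ((r / (1 - r) + |r| / (1 - |r|)) / 2) := by
  have hgeo := hasSum_pow_succ hr
  have hgeo_abs := hasSum_pow_succ (r := |r|) (by rwa [abs_abs])
  simp only [← abs_pow] at hgeo_abs
  exact ⟨hasSum_le (fun k => half_sub_abs_le_mul (hc k)) ((hgeo.sub hgeo_abs).div_const 2) hx,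
    hasSum_le (fun k => mul_le_half_add_abs (hc k)) hx ((hgeo.add hgeo_abs).div_const 2)⟩

theorem JR_subset_Icc {q : ℝ} (hq : q < -1) :
    JR q ⊆ Set.Icc (q / (q ^ 2 - 1)) (1 / (q ^ 2 - 1)) := by
  rintro x ⟨c, hc, hx⟩
  have hq0 : q ≠ 0 := by linarith
  have hq1 : q - 1 ≠ 0 := by linarith
  have hq2 : q + 1 ≠ 0 := by linarith
  have habs : |q⁻¹| = -q⁻¹ := abs_of_neg (inv_lt_zero.mpr (by linarith))
  have hr : |q⁻¹| < 1 := by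
    rw [habs, neg_lt, lt_inv_of_neg (by norm_num) (by linarith)]
    linarith
  have hdigit : ∀ k, (c (k + 1) : ℝ) ∈ Set.Icc 0 1 :=
    fun k => ⟨Nat.cast_nonneg _, by exact_mod_cast hc (k + 1)⟩
  simp only [div_eq_mul_inv (c _ : ℝ), ← inv_pow] at hx
  have h1 : 1 - q⁻¹ = (q - 1) / q := by field_simp
  have h2 : 1 - -q⁻¹ = (q + 1) / q := by field_simp; ring
  have hsq : q ^ 2 - 1 = (q - 1) * (q + 1) := by ring
  convert mem_Icc_of_hasSum_mul_pow_succ hr hdigit hx using 2 <;>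
  · rw [habs, h1, h2, hsq]; field_simp; ring

lemma sum_div_pow_add_div_pow_eq {q : ℝ} (hq : q ≠ 0) {y e : ℕ → ℝ}
    (hy : ∀ n, y (n + 1) = q * y n - e n) (n : ℕ) :
    ∑ k ∈ range n, e k / q ^ (k + 1) + y n / q ^ n = y 0 := by
  induction n with
  | zero => simp
  | succ n ih =>
    rw [← ih, sum_range_succ, hy, pow_succ]
    field_simp
    ring

theorem hasSum_div_pow_of_bounded {q M : ℝ} (hq : 1 < |q|) {y e : ℕ → ℝ}
    (hy : ∀ n, y (n + 1) = q * y n - e n) (hM : ∀ n, |y n| ≤ M) :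
    HasSum (fun k => e k / q ^ (k + 1)) (y 0) := by
  have hq0 : q ≠ 0 := abs_pos.mp (by linarith)
  have hr0 : 0 ≤ |q|⁻¹ := by positivity
  have hr1 : |q|⁻¹ < 1 := inv_lt_one_of_one_lt₀ hq
  have he : ∀ k, |e k| ≤ (|q| + 1) * M := fun k => by
    rw [show e k = q * y k - y (k + 1) by rw [hy]; ring]
    calc |q * y k - y (k + 1)| ≤ |q| * |y k| + |y (k + 1)| := by
          rw [← abs_mul]; exact abs_sub _ _
      _ ≤ |q| * M + M := by gcongr <;> apply hM
      _ = (|q| + 1) * M := by ring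
  have hsummable : Summable (fun k => e k / q ^ (k + 1)) := by
    refine Summable.of_norm_bounded
      ((summable_geometric_of_lt_one hr0 hr1).mul_left ((|q| + 1) * M * |q|⁻¹)) fun k => ?_
    rw [norm_div, norm_pow, Real.norm_eq_abs, Real.norm_eq_abs, div_eq_mul_inv, ← inv_pow,
      pow_succ', ← mul_assoc]
    gcongr
    exact he k
  have hrem : Tendsto (fun n => y n / q ^ n) atTop (𝓝 0) := by
    refine squeeze_zero_norm (fun n => ?_) (by
      simpa using (tendsto_pow_atTop_nhds_zero_of_lt_one hr0 hr1).const_mul M)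
    rw [norm_div, norm_pow, Real.norm_eq_abs, Real.norm_eq_abs, div_eq_mul_inv, ← inv_pow]
    gcongr
    exact hM n
  have hpartial : ∀ n, ∑ k ∈ range n, e k / q ^ (k + 1) = y 0 - y n / q ^ n := fun n => by
    rw [← sum_div_pow_add_div_pow_eq hq0 hy n]; ring
  rw [hsummable.hasSum_iff_tendsto_nat]
  simpa [hpartial] using tendsto_const_nhds.sub hrem

theorem subset_JR_of_forall_exists_digit {q : ℝ} (hq : 1 < |q|) {S : Set ℝ}
    (hS : Bornology.IsBounded S) (hstep : ∀ y ∈ S, ∃ d : ℕ, d ≤ 1 ∧ q * y - d ∈ S) :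
    S ⊆ JR q := by
  intro x hx
  choose! d hd hdS using hstep
  set T : ℝ → ℝ := fun y => q * y - d y
  have horbit : ∀ n, T^[n] x ∈ S := fun n => Set.MapsTo.iterate (fun y hy => hdS y hy) n hx
  obtain ⟨M, hM⟩ := hS.exists_norm_le
  refine ⟨fun k => d (T^[k - 1] x), fun k => hd _ (horbit _), ?_⟩
  exact hasSum_div_pow_of_bounded hq (fun n => Function.iterate_succ_apply' T n x)
    (fun n => hM _ (horbit n))

theorem exists_digit_mem_Icc {q : ℝ} (hq1 : q < -1) (hq2 : -2 ≤ q) (y : ℝ)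
    (hy : y ∈ Set.Icc (q / (q ^ 2 - 1)) (1 / (q ^ 2 - 1))) :
    ∃ d : ℕ, d ≤ 1 ∧ q * y - d ∈ Set.Icc (q / (q ^ 2 - 1)) (1 / (q ^ 2 - 1)) := by
  have hA : 0 < q ^ 2 - 1 := by nlinarith
  have hgap : q + (q ^ 2 - 1) ≤ 1 := by nlinarith
  obtain ⟨hlo, hhi⟩ := hy
  rw [div_le_iff₀ hA] at hlo
  rw [le_div_iff₀ hA] at hhi
  by_cases h : q * y ≤ 1 / (q ^ 2 - 1)
  · refine ⟨0, zero_le_one, ?_⟩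
    rw [le_div_iff₀ hA] at h
    rw [Nat.cast_zero, sub_zero, Set.mem_Icc, div_le_iff₀ hA, le_div_iff₀ hA]
    exact ⟨by nlinarith, h⟩
  · refine ⟨1, le_rfl, ?_⟩
    rw [not_le, div_lt_iff₀ hA] at h
    rw [Nat.cast_one, Set.mem_Icc, div_le_iff₀ hA, le_div_iff₀ hA]
    constructor <;> nlinarith

theorem negative_base_J_interval (p : ℝ) (hp1 : 1 < p) (hp2 : p ≤ 2) (q : ℝ) (hq : q = -p) :
    JR q = Set.Icc (q / (q ^ 2 - 1)) (1 / (q ^ 2 - 1)) := by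
  have hq1 : q < -1 := by linarith
  have hq2 : -2 ≤ q := by linarith
  refine (JR_subset_Icc hq1).antisymm
    (subset_JR_of_forall_exists_digit ?_ (Metric.isBounded_Icc _ _) (exists_digit_mem_Icc hq1 hq2))
  rw [abs_of_neg (by linarith)]
  linarith
end

section
/- Let p > 2 and q = -p. Then J_q is not connected (as a subset of ℝ). -/
/-!
Since `2x - ∑ q^-(k+1) = ∑ (2c_{k+1} - 1) q^-(k+1)` and `|2c - 1| = 1`, every `x ∈ J_q` satisfies
`|2x - 1/(q-1)| ≤ 1/(|q|-1)`. Peeling off the first digit writes `x = (d + y)/q` with `y ∈ J_q`;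
for `x = 1/(2(q-1))` this forces `2y - 1/(q-1) = 1 - 2d = ±1`, impossible when `|q| > 2`.
So `J_q` misses `1/(2(q-1))`, which lies between its points `0` and `1/q`.
-/

open Set

lemma hasSum_inv_pow_succ {q : ℝ} (hq : 1 < |q|) :
    HasSum (fun k : ℕ => (q ^ (k + 1))⁻¹) (q - 1)⁻¹ := by
  have hq0 : q ≠ 0 := by rintro rfl; norm_num at hq
  have hq1 : q - 1 ≠ 0 := by rintro h; rw [sub_eq_zero.mp h, abs_one] at hq; exact lt_irrefl _ hq
  have hr : |q⁻¹| < 1 := by rw [abs_inv]; exact inv_lt_one_of_one_lt₀ hq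
  have h := (hasSum_geometric_of_abs_lt_one hr).mul_left q⁻¹
  rw [show q⁻¹ * (1 - q⁻¹)⁻¹ = (q - 1)⁻¹ by field_simp] at h
  simpa only [← inv_pow, ← pow_succ'] using h

lemma inv_two_mul_sub_one_mem_uIcc {q : ℝ} (hq : 2 < |q|) : (2 * (q - 1))⁻¹ ∈ uIcc 0 q⁻¹ := by
  rcases lt_or_gt_of_ne (show q ≠ 0 by rintro rfl; norm_num at hq) with hneg | hpos
  · rw [abs_of_neg hneg] at hq
    rw [uIcc_of_ge (inv_nonpos.mpr hneg.le)]
    constructor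
    · rw [inv_le_inv_of_neg hneg (by linarith)]; linarith
    · exact inv_nonpos.mpr (by linarith)
  · rw [abs_of_pos hpos] at hq
    rw [uIcc_of_le (inv_nonneg.mpr hpos.le)]
    constructor
    · exact inv_nonneg.mpr (by linarith)
    · rw [inv_le_inv₀ (by linarith) hpos]; linarith

namespace JR

variable {q x : ℝ}

lemma zero_mem (q : ℝ) : (0 : ℝ) ∈ JR q :=
  ⟨0, fun _ => zero_le_one, by simp⟩

lemma inv_mem (q : ℝ) : q⁻¹ ∈ JR q := by
  refine ⟨fun k => if k = 1 then 1 else 0, fun k => by dsimp only; split_ifs <;> norm_num, ?_⟩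
  have h : (fun k : ℕ => ((if k + 1 = 1 then 1 else 0 : ℕ) : ℝ) / q ^ (k + 1)) =
      fun k => if k = 0 then q⁻¹ else 0 := by
    ext k; rcases k with _ | k <;> simp
  rw [h]
  exact hasSum_ite_eq 0 q⁻¹

lemma abs_two_mul_sub_inv_le (hq : 1 < |q|) (hx : x ∈ JR q) :
    |2 * x - (q - 1)⁻¹| ≤ (|q| - 1)⁻¹ := by
  obtain ⟨c, hc, hsum⟩ := hx
  have habs : 1 < |(|q|)| := by rwa [abs_abs]
  refine ((hsum.mul_left 2).sub (hasSum_inv_pow_succ hq)).norm_le_of_bounded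
    (hasSum_inv_pow_succ habs) fun k => ?_
  have hdigit : |2 * (c (k + 1) : ℝ) - 1| ≤ 1 := by
    rcases Nat.le_one_iff_eq_zero_or_eq_one.mp (hc (k + 1)) with h | h <;> norm_num [h]
  rw [Real.norm_eq_abs, ← abs_pow, ← mul_div_assoc, div_eq_mul_inv, ← sub_one_mul, abs_mul,
    abs_inv]
  exact mul_le_of_le_one_left (by positivity) hdigit

lemma exists_eq_digit_add_div (hq : q ≠ 0) (hx : x ∈ JR q) :
    ∃ d : ℕ, d ≤ 1 ∧ ∃ y ∈ JR q, x = (d + y) / q := by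
  obtain ⟨c, hc, hsum⟩ := hx
  refine ⟨c 1, hc 1, q * x - c 1, ⟨fun k => c (k + 1), fun k => hc (k + 1), ?_⟩,
    by field_simp; ring⟩
  have htail := ((hasSum_nat_add_iff' 1).mpr hsum).mul_left q
  have h : (fun k : ℕ => q * ((c (k + 1 + 1) : ℝ) / q ^ (k + 1 + 1))) =
      fun k => (c (k + 1 + 1) : ℝ) / q ^ (k + 1) := by
    ext k; rw [pow_succ]; field_simp
  rwa [h, Finset.sum_range_one, zero_add, pow_one, mul_sub, mul_div_cancel₀ _ hq] at htail

lemma inv_two_mul_sub_one_notMem (hq : 2 < |q|) : (2 * (q - 1))⁻¹ ∉ JR q := by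
  intro hx
  have hq0 : q ≠ 0 := by rintro rfl; norm_num at hq
  have hq1 : q - 1 ≠ 0 := by rintro h; rw [sub_eq_zero.mp h, abs_one] at hq; norm_num at hq
  obtain ⟨d, hd, y, hy, hxy⟩ := exists_eq_digit_add_div hq0 hx
  have hbound := abs_two_mul_sub_inv_le (by linarith) hy
  have hy_eq : 2 * y - (q - 1)⁻¹ = 1 - 2 * d := by field_simp at hxy ⊢; linarith
  have hsign : |(1 : ℝ) - 2 * d| = 1 := by
    rcases Nat.le_one_iff_eq_zero_or_eq_one.mp hd with h | h <;> norm_num [h]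
  rw [hy_eq, hsign, le_inv_comm₀ one_pos (by linarith), inv_one] at hbound
  linarith

theorem not_isPreconnected (hq : 2 < |q|) : ¬IsPreconnected (JR q) := fun h =>
  inv_two_mul_sub_one_notMem hq <|
    h.ordConnected.uIcc_subset (zero_mem q) (inv_mem q) (inv_two_mul_sub_one_mem_uIcc hq)

end JR

theorem negative_base_J_not_connected (p : ℝ) (hp : 2 < p) (q : ℝ) (hq : q = -p) :
    ¬ IsPreconnected (JR q) := by
  subst hq
  exact JR.not_isPreconnected (by rwa [abs_neg, abs_of_pos (by linarith)])
end

section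
/- Let p > 1 and q = -p. The number q/(q²-1) = -p/(p²-1) has a unique expansion in base q with digits {0,1}, namely the periodic sequence (1,0,1,0,...). -/
/-!
In a negative base `q` the odd powers `q^k` are negative and the even ones positive, so among
all digit sequences in `{0,1}` the sequence `1,0,1,0,…` minimises every single term `c_k / q^k`.
Its value `q / (q^2 - 1)` is a geometric series; any other expansion of that value would have
all terms at least as large and the same sum, hence the same terms.
-/

theorem eq_of_le_of_hasSum {ι α : Type*} [AddCommGroup α] [PartialOrder α] [IsOrderedAddMonoid α]
    [TopologicalSpace α] [IsTopologicalAddGroup α] [OrderClosedTopology α] {f g : ι → α} {a : α}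
    (h : f ≤ g) (hf : HasSum f a) (hg : HasSum g a) : f = g :=
  funext fun i => (h i).eq_of_not_lt fun hi => (hasSum_lt h hi hf hg).false

theorem hasSum_odd_indicator_div_pow {K : Type*} [NormedField K] {q : K} (hq : 1 < ‖q‖) :
    HasSum (fun k : ℕ => ((if Odd (k + 1) then (1 : ℕ) else 0) : K) / q ^ (k + 1))
      (q / (q ^ 2 - 1)) := by
  have hq₀ : q ≠ 0 := norm_pos_iff.mp (one_pos.trans hq)
  have hq₂ : q ^ 2 - 1 ≠ 0 := by
    intro h
    have : ‖q‖ ^ 2 = 1 := by rw [← norm_pow, sub_eq_zero.mp h, norm_one]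
    nlinarith
  have hratio : ‖(q ^ 2)⁻¹‖ < 1 := by
    rw [norm_inv, norm_pow]
    exact inv_lt_one_of_one_lt₀ (one_lt_pow₀ hq two_ne_zero)
  have hvalue : q⁻¹ * (1 - (q ^ 2)⁻¹)⁻¹ + 0 = q / (q ^ 2 - 1) := by
    rw [add_zero]
    field_simp
  rw [← hvalue]
  refine HasSum.even_add_odd ?_ ?_
  · refine ((hasSum_geometric_of_norm_lt_one hratio).mul_left q⁻¹).congr_fun fun k => ?_
    simp [pow_succ, pow_mul, mul_comm, mul_pow, inv_pow]
  · refine hasSum_zero.congr_fun fun k => ?_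
    simp [Nat.odd_add_one, parity_simps]

theorem odd_indicator_div_pow_le {K : Type*} [Field K] [LinearOrder K] [IsStrictOrderedRing K]
    {q : K} (hq : q < 0) {x : K} (hx₀ : 0 ≤ x) (hx₁ : x ≤ 1) (n : ℕ) :
    ((if Odd n then (1 : ℕ) else 0) : K) / q ^ n ≤ x / q ^ n := by
  rcases Nat.even_or_odd n with hn | hn
  · simp [Nat.not_odd_iff_even.mpr hn, div_nonneg hx₀ (hn.pow_pos hq.ne).le]
  · simpa [hn] using div_le_div_of_nonpos_of_le (hn.pow_neg hq).le hx₁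

theorem negative_base_left_endpoint_unique (p : ℝ) (hp : 1 < p) (q : ℝ) (hq : q = -p) :
    HasSum (fun k : ℕ => ((if Odd (k + 1) then (1 : ℕ) else 0) : ℝ) / q ^ (k + 1))
      (q / (q ^ 2 - 1)) ∧
    ∀ c : ℕ → ℕ, (∀ k, c k ≤ 1) →
      HasSum (fun k : ℕ => (c (k + 1) : ℝ) / q ^ (k + 1)) (q / (q ^ 2 - 1)) →
      ∀ k, 1 ≤ k → c k = if Odd k then 1 else 0 := by
  have hq₀ : q < 0 := by linarith
  have hperiodic := hasSum_odd_indicator_div_pow (K := ℝ) (q := q)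
    (by rw [Real.norm_eq_abs, abs_of_neg hq₀]; linarith)
  refine ⟨hperiodic, fun c hc hsum k hk => ?_⟩
  have hle : (fun k : ℕ => ((if Odd (k + 1) then (1 : ℕ) else 0) : ℝ) / q ^ (k + 1)) ≤
      fun k => (c (k + 1) : ℝ) / q ^ (k + 1) := fun k =>
    odd_indicator_div_pow_le hq₀ (Nat.cast_nonneg _) (by exact_mod_cast hc (k + 1)) (k + 1)
  obtain ⟨j, rfl⟩ : ∃ j, k = j + 1 := ⟨k - 1, by omega⟩
  have hj := congrFun (eq_of_le_of_hasSum hle hperiodic hsum) j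
  rw [div_left_inj' (pow_ne_zero _ hq₀.ne)] at hj
  exact_mod_cast hj.symm
end

section
/- Fix a positive integer m' and define the transformation T on {0,1}-sequences by T(d)_{m'i+j} = 1 - d_{m'i+j} if i is even and d_{m'i+j} if i is odd (i ≥ 0, 1 ≤ j ≤ m'). Then a sequence d is universal if and only if T(d) is universal. -/
/-- The transformation `T`: for `n = m'·i + j` with `i ≥ 0` and `1 ≤ j ≤ m'`
(so that `i = (n-1)/m'`), complement the digit when `i` is even. -/
def T (m' : ℕ) (d : ℕ → ℕ) : ℕ → ℕ :=
  fun n => if Even ((n - 1) / m') then 1 - d n else d n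

/-- A {0,1}-sequence (indexed from 1) is universal if it contains every finite
{0,1}-block as a consecutive subblock. -/
def Universal (d : ℕ → ℕ) : Prop :=
  ∀ w : List ℕ, (∀ b ∈ w, b ≤ 1) →
    ∃ n : ℕ, ∀ i < w.length, d (n + 1 + i) = w.getD i 0

/-!
`T` flips the digits of `d` on a `2m'`-periodic set of positions. Since a universal sequence
contains every block at positions in every residue class mod `2m'`, it contains the block
`w` flipped by the mask at a position where the mask has phase `0`, and there `T` turns it into
`w`. As `T` is an involution on {0,1}-sequences, this gives both directions.
-/

theorem List.getD_zero_le_one {w : List ℕ} (hw : ∀ b ∈ w, b ≤ 1) (i : ℕ) :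
    w.getD i 0 ≤ 1 := by
  rcases lt_or_ge i w.length with hi | hi
  · rw [List.getD_eq_getElem _ _ hi]
    exact hw _ (List.getElem_mem hi)
  · rw [List.getD_eq_default _ _ hi]
    exact zero_le_one

namespace Universal

variable {d : ℕ → ℕ}

theorem exists_block (hu : Universal d) {f : ℕ → ℕ} (hf : ∀ j, f j ≤ 1) (N : ℕ) :
    ∃ n, ∀ j < N, d (n + 1 + j) = f j := by
  obtain ⟨n, hn⟩ := hu ((List.range N).map f) (by simpa using fun j _ => hf j)
  refine ⟨n, fun j hj => ?_⟩
  simpa [hj] using hn j (by simpa using hj)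

/-- Repeat the block with period `M ≡ -1 [MOD P]`: the `P` consecutive copies then start in every
residue class. -/
theorem exists_block_at_mul (hu : Universal d) {P : ℕ} (hP : 0 < P) {f : ℕ → ℕ}
    (hf : ∀ j, f j ≤ 1) (N : ℕ) : ∃ k, ∀ j < N, d (P * k + 1 + j) = f j := by
  set M := P * (N + 1) - 1
  have hM : M + 1 = P * (N + 1) := Nat.sub_add_cancel (Nat.one_le_iff_ne_zero.2 (by positivity))
  have hNM : N ≤ M := by nlinarith
  obtain ⟨n, hn⟩ := hu.exists_block (f := fun j => f (j % M)) (fun j => hf _) (P * M)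
  have hnP := Nat.div_add_mod n P
  set r := n % P
  have hrP : r < P := Nat.mod_lt n hP
  refine ⟨n / P + r * (N + 1), fun j hj => ?_⟩
  have hpos : P * (n / P + r * (N + 1)) = n + r * M := calc
    _ = P * (n / P) + r * (M + 1) := by rw [hM]; ring
    _ = n + r * M := by linarith
  have hjM : j + r * M < P * M := by nlinarith
  rw [hpos, show n + r * M + 1 + j = n + 1 + (j + r * M) by ring, hn _ hjM,
    Nat.add_mul_mod_self_right, Nat.mod_eq_of_lt (by omega)]

end Universal

def flipOn (c : ℕ → Prop) [DecidablePred c] (d : ℕ → ℕ) : ℕ → ℕ :=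
  fun n => if c n then 1 - d n else d n

theorem flipOn_flipOn (c : ℕ → Prop) [DecidablePred c] {d : ℕ → ℕ}
    (hd : ∀ n, d n ≤ 1) :
    flipOn c (flipOn c d) = d := by
  funext n
  have := hd n
  unfold flipOn
  split_ifs <;> omega

theorem Universal.flipOn {d : ℕ → ℕ} (hu : Universal d) {c : ℕ → Prop} [DecidablePred c]
    {P : ℕ} (hP : 0 < P) (hc : ∀ k i, c (P * k + 1 + i) ↔ c (1 + i)) :
    Universal (flipOn c d) := by
  intro w hw
  have hw' := List.getD_zero_le_one hw
  obtain ⟨k, hk⟩ := hu.exists_block_at_mul hP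
    (f := fun i => if c (1 + i) then 1 - w.getD i 0 else w.getD i 0)
    (fun i => by have := hw' i; split_ifs <;> omega) w.length
  refine ⟨P * k, fun i hi => ?_⟩
  have := hw' i
  simp only [_root_.flipOn, hk i hi, hc]
  split_ifs <;> omega

theorem T_eq_flipOn (m' : ℕ) (d : ℕ → ℕ) :
    T m' d = flipOn (fun n => Even ((n - 1) / m')) d := rfl

theorem even_div_add_two_mul_iff {m' : ℕ} (hm' : 0 < m') (k i : ℕ) :
    Even ((2 * m' * k + 1 + i - 1) / m') ↔ Even ((1 + i - 1) / m') := by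
  rw [show 2 * m' * k + 1 + i - 1 = i + m' * (2 * k) by grind, Nat.add_mul_div_left _ _ hm',
    Nat.add_sub_cancel_left, Nat.even_add]
  simp

theorem universal_iff_T_universal (m' : ℕ) (hm' : 1 ≤ m')
    (d : ℕ → ℕ) (hd : ∀ n, d n ≤ 1) :
    Universal d ↔ Universal (T m' d) := by
  have hT {e : ℕ → ℕ} (he : Universal e) : Universal (T m' e) :=
    he.flipOn (by omega : 0 < 2 * m') (even_div_add_two_mul_iff (by omega))
  refine ⟨hT, fun h => ?_⟩
  simpa only [T_eq_flipOn, flipOn_flipOn _ hd] using hT h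
end

section
/- If q = -(1+√5)/2, then the set of expansions of x = 0 in base q with digit set {0,1} is countably infinite. -/
/-!
Put `ψ = q⁻¹ = (1 - √5) / 2`, so the condition reads `∑ c (k + 1) ψ ^ (k + 1) = 0`, with `c 0`
unconstrained. Since `1 - ψ ^ 2 = -ψ`, the digit string `1 1 0 1 0 1 0 …` has value
`1 + ψ / (1 - ψ ^ 2) = 0`. As `ψ ^ k` alternates in sign, that string minimises every term
`d k * ψ ^ k` among digit strings starting with `1`, so it is the only expansion of `0` that starts
with `1`. Hence the nonzero expansions of `0` are exactly its shifts, one for each position of the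
first nonzero digit.
-/

open Real goldenRatio Set Function

def expansionsOfZero (b : ℝ) : Set (ℕ → ℕ) :=
  {d | (∀ k, d k ≤ 1) ∧ HasSum (fun k => (d k : ℝ) * b ^ k) 0}

def zeroDigits (k : ℕ) : ℕ := if k = 0 ∨ Odd k then 1 else 0

def shiftedZeroDigits (n k : ℕ) : ℕ := if n ≤ k then zeroDigits (k - n) else 0

lemma hasSum_div_pow_succ_zero_iff {a : ℕ → ℝ} {q : ℝ} (hq : q ≠ 0) :
    HasSum (fun k => a k / q ^ (k + 1)) 0 ↔ HasSum (fun k => a k * q⁻¹ ^ k) 0 := by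
  rw [show (fun k => a k / q ^ (k + 1)) = fun k => q⁻¹ * (a k * q⁻¹ ^ k) by
    ext k; rw [div_eq_mul_inv, ← inv_pow, pow_succ]; ring]
  simpa only [mul_zero] using hasSum_mul_left_iff (a₁ := 0) (inv_ne_zero hq)

lemma hasSum_mul_pow_zero_iff_nat_add {a : ℕ → ℝ} {b : ℝ} (hb : b ≠ 0) {n : ℕ}
    (ha : ∀ k < n, a k = 0) :
    HasSum (fun k => a k * b ^ k) 0 ↔ HasSum (fun k => a (k + n) * b ^ k) 0 := by
  rw [← hasSum_nat_add_iff' n,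
    Finset.sum_eq_zero fun k hk => by simp [ha k (Finset.mem_range.1 hk)], sub_zero,
    show (fun k => a (k + n) * b ^ (k + n)) = fun k => b ^ n * (a (k + n) * b ^ k) by
      ext k; ring]
  simpa only [mul_zero] using hasSum_mul_left_iff (a₁ := 0) (pow_ne_zero n hb)

lemma bijective_head_tail {α : Type*} : Bijective fun c : ℕ → α => (c 0, fun k => c (k + 1)) := by
  refine ⟨fun c c' h => funext fun k => ?_, fun ⟨a, d⟩ => ⟨fun k => Nat.casesOn k a d, rfl⟩⟩
  obtain ⟨h_head, h_tail⟩ := Prod.ext_iff.1 h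
  cases k
  exacts [h_head, congrFun h_tail _]

lemma zeroDigits_two_mul (k : ℕ) : zeroDigits (2 * k) = if k = 0 then 1 else 0 := by
  simp [zeroDigits, Nat.not_odd_iff_even.2 (even_two_mul k)]

lemma zeroDigits_two_mul_add_one (k : ℕ) : zeroDigits (2 * k + 1) = 1 := by
  simp [zeroDigits]

lemma hasSum_zeroDigits : HasSum (fun k => (zeroDigits k : ℝ) * ψ ^ k) 0 := by
  have h_even : HasSum (fun k => (zeroDigits (2 * k) : ℝ) * ψ ^ (2 * k)) 1 :=
    (hasSum_ite_eq 0 (1 : ℝ)).congr_fun fun k => by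
      rw [zeroDigits_two_mul]; split_ifs with hk <;> simp [hk]
  have h_odd : HasSum (fun k => (zeroDigits (2 * k + 1) : ℝ) * ψ ^ (2 * k + 1)) (-1) := by
    have hψ_sq_lt : ψ ^ 2 < 1 := by nlinarith [goldenConj_neg, neg_one_lt_goldenConj]
    have h_sum : ψ * (1 - ψ ^ 2)⁻¹ = -1 := by
      rw [goldenConj_sq, show 1 - (ψ + 1) = -ψ by ring, inv_neg, mul_neg,
        mul_inv_cancel₀ goldenConj_ne_zero]
    have h_geom := (hasSum_geometric_of_lt_one (sq_nonneg ψ) hψ_sq_lt).mul_left ψ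
    rw [h_sum] at h_geom
    refine h_geom.congr_fun fun k => ?_
    rw [zeroDigits_two_mul_add_one, Nat.cast_one, one_mul, pow_succ, pow_mul, mul_comm]
  simpa only [add_neg_cancel] using
    HasSum.even_add_odd (f := fun k => (zeroDigits k : ℝ) * ψ ^ k) h_even h_odd

lemma zeroDigits_mul_pow_lt {k x : ℕ} (hk : k ≠ 0) (hx : x ≤ 1) (hne : x ≠ zeroDigits k) :
    (zeroDigits k : ℝ) * ψ ^ k < x * ψ ^ k := by
  rcases Nat.even_or_odd k with he | ho
  · have hz : zeroDigits k = 0 := by simp [zeroDigits, hk, Nat.not_odd_iff_even.2 he]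
    obtain rfl : x = 1 := by omega
    simpa [hz] using he.pow_pos goldenConj_ne_zero
  · have hz : zeroDigits k = 1 := by simp [zeroDigits, ho]
    obtain rfl : x = 0 := by omega
    simpa [hz] using ho.pow_neg goldenConj_neg

lemma eq_zeroDigits_of_mem_expansionsOfZero {d : ℕ → ℕ} (hd : d ∈ expansionsOfZero ψ)
    (h0 : d 0 = 1) : d = zeroDigits := by
  by_contra hne
  obtain ⟨j, hj⟩ := ne_iff.1 hne
  have hlt : ∀ k, d k ≠ zeroDigits k → (zeroDigits k : ℝ) * ψ ^ k < d k * ψ ^ k := fun k hk =>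
    zeroDigits_mul_pow_lt (by rintro rfl; simp [zeroDigits, h0] at hk) (hd.1 k) hk
  have hle : ∀ k, (zeroDigits k : ℝ) * ψ ^ k ≤ d k * ψ ^ k := fun k =>
    (eq_or_ne (d k) (zeroDigits k)).elim (fun h => by rw [h]) fun h => (hlt k h).le
  exact lt_irrefl 0 (hasSum_lt hle (hlt j hj) hasSum_zeroDigits hd.2)

lemma shiftedZeroDigits_mem_expansionsOfZero (n : ℕ) :
    shiftedZeroDigits n ∈ expansionsOfZero ψ := by
  refine ⟨fun k => ?_, ?_⟩
  · unfold shiftedZeroDigits zeroDigits; split_ifs <;> omega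
  · refine (hasSum_mul_pow_zero_iff_nat_add (n := n) goldenConj_ne_zero fun k hk => ?_).2 ?_
    · simp [shiftedZeroDigits, hk]
    · simpa [shiftedZeroDigits] using hasSum_zeroDigits

lemma expansionsOfZero_goldenConj :
    expansionsOfZero ψ = insert 0 (range shiftedZeroDigits) := by
  refine Subset.antisymm (fun d hd => ?_) ?_
  · rcases eq_or_ne d 0 with rfl | hne
    · exact mem_insert _ _
    have hex : ∃ n, d n ≠ 0 := ne_iff.1 hne
    obtain ⟨n, h_ne, hlt⟩ : ∃ n, d n ≠ 0 ∧ ∀ k < n, d k = 0 :=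
      ⟨Nat.find hex, Nat.find_spec hex, fun k hk => not_not.1 (Nat.find_min hex hk)⟩
    have h_tail : (fun k => d (k + n)) = zeroDigits := by
      refine eq_zeroDigits_of_mem_expansionsOfZero ⟨fun k => hd.1 _, ?_⟩ ?_
      · exact (hasSum_mul_pow_zero_iff_nat_add (a := fun k => (d k : ℝ)) goldenConj_ne_zero
          fun k hk => by simp [hlt k hk]).1 hd.2
      · have h_le := hd.1 n
        rw [zero_add]
        omega
    refine mem_insert_of_mem _ ⟨n, funext fun k => ?_⟩
    unfold shiftedZeroDigits
    split_ifs with hk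
    · simp only [← h_tail, Nat.sub_add_cancel hk]
    · exact (hlt k (by omega)).symm
  · rintro _ (rfl | ⟨n, rfl⟩)
    · exact ⟨fun _ => zero_le_one, by simp⟩
    · exact shiftedZeroDigits_mem_expansionsOfZero n

lemma shiftedZeroDigits_injective : Injective shiftedZeroDigits := by
  have h : ∀ m n, shiftedZeroDigits m = shiftedZeroDigits n → n ≤ m := fun m n hmn => by
    by_contra! hlt
    simpa [shiftedZeroDigits, zeroDigits, hlt.not_ge] using congrFun hmn m
  exact fun m n hmn => le_antisymm (h n m hmn.symm) (h m n hmn)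

lemma expansionsOfZero_goldenConj_countable : (expansionsOfZero ψ).Countable :=
  expansionsOfZero_goldenConj ▸ (countable_range _).insert 0

lemma expansionsOfZero_goldenConj_infinite : (expansionsOfZero ψ).Infinite :=
  expansionsOfZero_goldenConj ▸
    (infinite_range_of_injective shiftedZeroDigits_injective).mono (subset_insert _ _)

theorem countably_many_expansions_of_zero_neg_golden (q : ℝ)
    (hq : q = -((1 + Real.sqrt 5) / 2)) :
    Set.Countable {c : ℕ → ℕ | (∀ k, c k ≤ 1) ∧
        HasSum (fun k : ℕ => (c (k + 1) : ℝ) / q ^ (k + 1)) 0} ∧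
    Set.Infinite {c : ℕ → ℕ | (∀ k, c k ≤ 1) ∧
        HasSum (fun k : ℕ => (c (k + 1) : ℝ) / q ^ (k + 1)) 0} := by
  have hq : q = -φ := hq
  have hq_inv : q⁻¹ = ψ := by rw [hq, inv_neg, inv_goldenRatio, neg_neg]
  have hq_ne : q ≠ 0 := by rw [hq]; exact neg_ne_zero.2 goldenRatio_ne_zero
  have hS : {c : ℕ → ℕ | (∀ k, c k ≤ 1) ∧ HasSum (fun k : ℕ => (c (k + 1) : ℝ) / q ^ (k + 1)) 0}
      = (fun c : ℕ → ℕ => (c 0, fun k => c (k + 1))) ⁻¹' (Iic 1 ×ˢ expansionsOfZero ψ) := by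
    ext c
    simp only [mem_ofPred_eq, mem_preimage, mem_prod, mem_Iic, expansionsOfZero,
      hasSum_div_pow_succ_zero_iff hq_ne, hq_inv]
    rw [← Nat.and_forall_add_one, and_assoc]
  rw [hS]
  exact ⟨((finite_Iic 1).countable.prod expansionsOfZero_goldenConj_countable).preimage
      bijective_head_tail.1,
    (expansionsOfZero_goldenConj_infinite.prod_right ⟨0, mem_Iic.2 zero_le_one⟩).preimage
      (bijective_head_tail.2.range_eq ▸ subset_univ _)⟩
end

section
/- Let q = ip with 1 < p ≤ √2. Identifying ℂ with ℝ², J_q equals the rectangle [-p²/(p⁴-1), 1/(p⁴-1)] × [-p³/(p⁴-1), p/(p⁴-1)]. -/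
/-! Since `q² = -p²` is real, the terms `c_k q^{-k}` with `k` even are real and those with `k` odd
are purely imaginary, and the two families use disjoint digits. Hence `J_q` is a product of two
real digit sets, each the negative of `{∑ aⱼ u rʲ : aⱼ ∈ {0,1}}` with `r = -1/p²`.
Flipping the digits of the negative terms turns such a set into a translate of the set of
subsums of `|u rʲ|`; since `|r| ≥ 1/2`, every term of that series is at most the sum of all
later ones, so the greedy algorithm reaches every point of `[0, ∑ |u rʲ|]` (Kakeya). -/

def IsExpansionC (q z : ℂ) (c : ℕ → ℕ) : Prop :=
  (∀ k, c k ≤ 1) ∧ HasSum (fun k : ℕ => (c (k + 1) : ℂ) / q ^ (k + 1)) z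

def JC (q : ℂ) : Set ℂ := {z | ∃ c, IsExpansionC q z c}

open Set Filter Topology

def subsums (x : ℕ → ℝ) : Set ℝ :=
  {y | ∃ a : ℕ → ℕ, (∀ j, a j ≤ 1) ∧ HasSum (fun j => (a j : ℝ) * x j) y}

lemma subsums_neg (x : ℕ → ℝ) : subsums (fun j => -x j) = -subsums x := by
  ext y
  simp only [subsums, mem_ofPred_eq, Set.mem_neg, mul_neg]
  exact exists_congr fun a => and_congr_right fun _ =>
    ⟨fun h => by simpa using h.neg, fun h => by simpa using h.neg⟩

section Greedy

variable (x : ℕ → ℝ) (y : ℝ)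

noncomputable def greedyRem : ℕ → ℝ
  | 0 => y
  | n + 1 => greedyRem n - if x n ≤ greedyRem n then x n else 0

noncomputable def greedyDigit (n : ℕ) : ℕ := if x n ≤ greedyRem x y n then 1 else 0

lemma greedyDigit_le_one (n : ℕ) : greedyDigit x y n ≤ 1 := by
  unfold greedyDigit; split <;> omega

lemma sum_greedyDigit_mul (n : ℕ) :
    ∑ j ∈ Finset.range n, (greedyDigit x y j : ℝ) * x j = y - greedyRem x y n := by
  induction n with
  | zero => simp [greedyRem]
  | succ n ih =>
    rw [Finset.sum_range_succ, ih, greedyRem, greedyDigit]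
    split <;> push_cast <;> ring

variable {x y}

lemma greedyRem_mem_Icc (hx : Summable x) (hgap : ∀ n, x n ≤ ∑' k, x (k + (n + 1)))
    (hy : y ∈ Icc 0 (∑' k, x k)) (n : ℕ) : greedyRem x y n ∈ Icc 0 (∑' k, x (k + n)) := by
  induction n with
  | zero => simpa [greedyRem] using hy
  | succ n ih =>
    have htail : ∑' k, x (k + n) = x n + ∑' k, x (k + (n + 1)) := by
      simpa [add_assoc, add_comm 1 n] using ((summable_nat_add_iff n).2 hx).tsum_eq_zero_add
    rw [greedyRem]
    split_ifs with h
    · constructor <;> linarith [ih.1, ih.2]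
    · constructor <;> linarith [ih.1, hgap n]

lemma mem_subsums_of_mem_Icc (hx0 : ∀ j, 0 ≤ x j) (hx : Summable x)
    (hgap : ∀ n, x n ≤ ∑' k, x (k + (n + 1))) (hy : y ∈ Icc 0 (∑' k, x k)) :
    y ∈ subsums x := by
  refine ⟨greedyDigit x y, greedyDigit_le_one x y, ?_⟩
  rw [hasSum_iff_tendsto_nat_of_nonneg fun j => mul_nonneg (Nat.cast_nonneg _) (hx0 j)]
  simp only [sum_greedyDigit_mul]
  have hrem : Tendsto (greedyRem x y) atTop (𝓝 0) :=
    squeeze_zero (fun n => (greedyRem_mem_Icc hx hgap hy n).1)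
      (fun n => (greedyRem_mem_Icc hx hgap hy n).2) (tendsto_sum_nat_add x)
  simpa using tendsto_const_nhds.sub hrem

end Greedy

lemma subsums_eq_Icc_of_nonneg {x : ℕ → ℝ} {A : ℝ} (hx0 : ∀ j, 0 ≤ x j)
    (hA : HasSum x A) (hgap : ∀ n, x n ≤ ∑' k, x (k + (n + 1))) : subsums x = Icc 0 A := by
  refine Subset.antisymm ?_ fun y hy =>
    mem_subsums_of_mem_Icc hx0 hA.summable hgap (hA.tsum_eq ▸ hy)
  rintro y ⟨a, ha, hy⟩
  have hax : ∀ j, (a j : ℝ) * x j ≤ x j := fun j =>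
    mul_le_of_le_one_left (hx0 j) (by exact_mod_cast ha j)
  exact ⟨hy.nonneg fun j => mul_nonneg (Nat.cast_nonneg _) (hx0 j), hasSum_le hax hy hA⟩

noncomputable def flipDigits (x : ℕ → ℝ) (a : ℕ → ℕ) (j : ℕ) : ℕ :=
  if x j < 0 then 1 - a j else a j

lemma flipDigits_le_one (x : ℕ → ℝ) {a : ℕ → ℕ} (ha : ∀ j, a j ≤ 1) (j : ℕ) :
    flipDigits x a j ≤ 1 := by
  have := ha j; unfold flipDigits; split <;> omega

lemma flipDigits_flipDigits (x : ℕ → ℝ) {a : ℕ → ℕ} (ha : ∀ j, a j ≤ 1) :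
    flipDigits x (flipDigits x a) = a := by
  funext j; have := ha j; unfold flipDigits; split <;> omega

lemma flipDigits_mul_abs (x : ℕ → ℝ) {a : ℕ → ℕ} (ha : ∀ j, a j ≤ 1) (j : ℕ) :
    (flipDigits x a j : ℝ) * |x j| = a j * x j + (x j)⁻ := by
  unfold flipDigits
  split_ifs with h
  · rw [Nat.cast_sub (ha j), abs_of_neg h, negPart_eq_neg.2 h.le]
    push_cast; ring
  · rw [abs_of_nonneg (not_lt.1 h), negPart_eq_zero.2 (not_lt.1 h), add_zero]

lemma mem_subsums_iff_add_mem_subsums_abs {x : ℕ → ℝ} {N : ℝ}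
    (hN : HasSum (fun j => (x j)⁻) N) (y : ℝ) :
    y ∈ subsums x ↔ y + N ∈ subsums (fun j => |x j|) := by
  constructor
  · rintro ⟨a, ha, hy⟩
    refine ⟨flipDigits x a, flipDigits_le_one x ha, ?_⟩
    simpa only [flipDigits_mul_abs x ha] using hy.add hN
  · rintro ⟨a, ha, hy⟩
    refine ⟨flipDigits x a, flipDigits_le_one x ha, ?_⟩
    rw [← flipDigits_flipDigits x ha] at hy
    simp only [flipDigits_mul_abs x (flipDigits_le_one x ha)] at hy
    simpa only [add_sub_cancel_right] using hy.sub hN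

theorem subsums_eq_Icc {x : ℕ → ℝ} {A N : ℝ} (hA : HasSum (fun j => |x j|) A)
    (hN : HasSum (fun j => (x j)⁻) N) (hgap : ∀ n, |x n| ≤ ∑' k, |x (k + (n + 1))|) :
    subsums x = Icc (-N) (A - N) := by
  ext y
  rw [mem_subsums_iff_add_mem_subsums_abs hN,
    subsums_eq_Icc_of_nonneg (fun j => abs_nonneg _) hA hgap]
  simp only [mem_Icc]
  constructor <;> rintro ⟨h1, h2⟩ <;> constructor <;> linarith

theorem subsums_geometric_of_neg {u r : ℝ} (hu : 0 ≤ u) (hr1 : -1 < r) (hr2 : r ≤ -1 / 2) :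
    subsums (fun j => u * r ^ j) = Icc (u * r / (1 - r ^ 2)) (u / (1 - r ^ 2)) := by
  have habs : |r| = -r := abs_of_neg (by linarith)
  have hterm : ∀ j, |u * r ^ j| = u * (-r) ^ j := fun j => by
    rw [abs_mul, abs_pow, habs, abs_of_nonneg hu]
  have hA : HasSum (fun j => |u * r ^ j|) (u * (1 + r)⁻¹) := by
    simpa only [hterm, sub_neg_eq_add] using
      (hasSum_geometric_of_lt_one (by linarith) (by linarith : -r < 1)).mul_left u
  have hN : HasSum (fun j => (u * r ^ j)⁻) (0 + -(u * r) * (1 - r ^ 2)⁻¹) := by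
    refine HasSum.even_add_odd ?_ ?_
    · simpa only [pow_mul, negPart_eq_zero.2 (mul_nonneg hu (pow_nonneg (sq_nonneg r) _))]
        using hasSum_zero
    · have hodd : ∀ k, (u * r ^ (2 * k + 1))⁻ = -(u * r) * (r ^ 2) ^ k := fun k => by
        rw [negPart_eq_neg.2 ?_]
        · ring
        · exact mul_nonpos_of_nonneg_of_nonpos hu (Odd.pow_nonpos ⟨k, rfl⟩ (by linarith))
      simpa only [hodd] using (hasSum_geometric_of_lt_one (sq_nonneg r) (by nlinarith)).mul_left
        (-(u * r))
  have h1 : 0 < 1 + r := by linarith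
  have hgap : ∀ n, |u * r ^ n| ≤ ∑' k, |u * r ^ (k + (n + 1))| := fun n => by
    have htail : ∑' k, |u * r ^ (k + (n + 1))| = u * (-r) ^ n * (-r / (1 + r)) := calc
      _ = ∑' k, u * (-r) ^ (n + 1) * (-r) ^ k := by congr 1 with k; rw [hterm]; ring
      _ = u * (-r) ^ (n + 1) * (1 - -r)⁻¹ := by
        rw [tsum_mul_left, tsum_geometric_of_lt_one (by linarith) (by linarith)]
      _ = u * (-r) ^ n * (-r / (1 + r)) := by rw [sub_neg_eq_add]; ring
    rw [htail, hterm]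
    exact le_mul_of_one_le_right (mul_nonneg hu (pow_nonneg (by linarith) n))
      ((one_le_div h1).2 (by linarith))
  rw [subsums_eq_Icc hA hN hgap]
  have h2 : 1 - r ^ 2 ≠ 0 := by nlinarith
  congr 1 <;> field_simp <;> ring

section Parity

variable {M : Type*} [AddCommMonoid M] [TopologicalSpace M] {f : ℕ → M} {a : M}

lemma hasSum_odd_iff_of_even_eq_zero (hf : ∀ j, f (2 * j) = 0) :
    HasSum (fun j => f (2 * j + 1)) a ↔ HasSum f a :=
  Function.Injective.hasSum_iff (f := f) (g := fun j => 2 * j + 1) (fun i j h => by simpa using h)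
    fun k hk => by
      obtain ⟨j, rfl | rfl⟩ := Nat.even_or_odd' k
      · exact hf j
      · exact absurd ⟨j, rfl⟩ hk

lemma hasSum_even_iff_of_odd_eq_zero (hf : ∀ j, f (2 * j + 1) = 0) :
    HasSum (fun j => f (2 * j)) a ↔ HasSum f a :=
  Function.Injective.hasSum_iff (f := f) (g := fun j => 2 * j) (fun i j h => by simpa using h)
    fun k hk => by
      obtain ⟨j, rfl | rfl⟩ := Nat.even_or_odd' k
      · exact absurd ⟨j, rfl⟩ hk
      · exact hf j

end Parity

open Complex in
lemma hasSum_expansion_iff {q : ℂ} {X Y : ℕ → ℝ}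
    (hY : ∀ j, (q ^ (2 * j + 1))⁻¹ = I * Y j) (hX : ∀ j, (q ^ (2 * j + 2))⁻¹ = X j)
    (c : ℕ → ℕ) (z : ℂ) :
    HasSum (fun k => (c (k + 1) : ℂ) / q ^ (k + 1)) z ↔
      HasSum (fun j => (c (2 * j + 2) : ℝ) * X j) z.re ∧
        HasSum (fun j => (c (2 * j + 1) : ℝ) * Y j) z.im := by
  rw [Complex.hasSum_iff,
    ← hasSum_odd_iff_of_even_eq_zero (f := fun k => ((c (k + 1) : ℂ) / q ^ (k + 1)).re),
    ← hasSum_even_iff_of_odd_eq_zero (f := fun k => ((c (k + 1) : ℂ) / q ^ (k + 1)).im)]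
  all_goals simp [div_eq_mul_inv, hX, hY, add_assoc]

open Complex in
theorem JC_eq_setOf_mem_subsums {q : ℂ} {X Y : ℕ → ℝ}
    (hY : ∀ j, (q ^ (2 * j + 1))⁻¹ = I * Y j) (hX : ∀ j, (q ^ (2 * j + 2))⁻¹ = X j) :
    JC q = {z | z.re ∈ subsums X ∧ z.im ∈ subsums Y} := by
  ext z
  simp only [JC, IsExpansionC, mem_ofPred_eq, hasSum_expansion_iff hY hX]
  constructor
  · rintro ⟨c, hc, hre, him⟩
    exact ⟨⟨fun j => c (2 * j + 2), fun j => hc _, hre⟩,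
      ⟨fun j => c (2 * j + 1), fun j => hc _, him⟩⟩
  · rintro ⟨⟨a, ha, hre⟩, ⟨b, hb, him⟩⟩
    -- `c 0` is not a digit of the expansion, so the truncated `0 / 2 - 1` is harmless
    refine ⟨fun k => if Even k then a (k / 2 - 1) else b (k / 2), fun k => ?_, ?_, ?_⟩
    · dsimp only; split; exacts [ha _, hb _]
    · convert hre using 3 with j
      simp [Nat.even_add_one]
    · convert him using 3 with j
      simp [show (2 * j + 1) / 2 = j by omega]

section ImaginaryBase

open Complex

variable (p : ℝ)

lemma inv_I_mul_pow_odd (j : ℕ) :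
    ((I * p) ^ (2 * j + 1))⁻¹ = I * ↑(-(p⁻¹ * (-(p ^ 2)⁻¹) ^ j)) := by
  rw [pow_succ, pow_mul, mul_inv, ← inv_pow, mul_pow, I_sq, mul_inv I, inv_I]
  push_cast
  ring

lemma inv_I_mul_pow_even (j : ℕ) :
    ((I * p) ^ (2 * j + 2))⁻¹ = ↑(-((p ^ 2)⁻¹ * (-(p ^ 2)⁻¹) ^ j)) := by
  rw [pow_add, pow_mul, mul_inv, ← inv_pow, mul_pow, I_sq]
  push_cast
  ring

end ImaginaryBase

theorem J_imaginary_base_rectangle (p : ℝ) (hp1 : 1 < p) (hp2 : p ≤ Real.sqrt 2)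
    (q : ℂ) (hq : q = Complex.I * p) :
    JC q = {z : ℂ |
      z.re ∈ Set.Icc (-p ^ 2 / (p ^ 4 - 1)) (1 / (p ^ 4 - 1)) ∧
      z.im ∈ Set.Icc (-p ^ 3 / (p ^ 4 - 1)) (p / (p ^ 4 - 1))} := by
  have hp_sq : p ^ 2 ≤ 2 := by
    simpa [Real.sq_sqrt] using pow_le_pow_left₀ (by positivity) hp2 2
  have hp_one : 1 < p ^ 2 := by nlinarith
  have hr1 : -1 < -(p ^ 2)⁻¹ := neg_lt_neg (inv_lt_one_of_one_lt₀ hp_one)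
  have hr2 : -(p ^ 2)⁻¹ ≤ -1 / 2 := by
    rw [neg_div, neg_le_neg_iff, one_div]
    exact inv_anti₀ (by positivity) hp_sq
  rw [hq, JC_eq_setOf_mem_subsums (inv_I_mul_pow_odd p) (inv_I_mul_pow_even p), subsums_neg,
    subsums_neg, subsums_geometric_of_neg (by positivity) hr1 hr2,
    subsums_geometric_of_neg (by positivity) hr1 hr2, neg_Icc, neg_Icc]
  have hp0 : p ≠ 0 := by positivity
  have hp4 : p ^ 4 - 1 ≠ 0 := by nlinarith
  congr! 5 <;> field_simp
end

section
/- Let q = ip with 1 < p < √((1+√5)/2). Then every point of J_q = [-p²/(p⁴-1), 1/(p⁴-1)] × [-p³/(p⁴-1), p/(p⁴-1)] except the four vertices of this rectangle has continuum many expansions in base q with digits {0,1}. -/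
open Set Filter Topology

theorem hasSum_div_pow_of_remainders {K : Type*} [NormedField K] [CompleteSpace K]
    {r : K} (hr : 1 < ‖r‖) {w v : ℕ → K} {C : ℝ} (hrec : ∀ n, w (n + 1) = r * w n - v n)
    (hbd : ∀ n, ‖w n‖ ≤ C) : HasSum (fun n => v n / r ^ (n + 1)) (w 0) := by
  have hr0 : r ≠ 0 := norm_pos_iff.mp (one_pos.trans hr)
  have htel : ∀ n, v n / r ^ (n + 1) = w n / r ^ n - w (n + 1) / r ^ (n + 1) := by
    intro n
    rw [hrec]
    field_simp
    ring
  have hbound : ∀ n, ‖w n / r ^ n‖ ≤ C * ‖r‖⁻¹ ^ n := fun n => by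
    rw [norm_div, norm_pow, inv_pow, div_eq_mul_inv]
    gcongr
    exact hbd n
  have hgeom : Summable fun n => C * ‖r‖⁻¹ ^ n :=
    (summable_geometric_of_lt_one (by positivity) (inv_lt_one_of_one_lt₀ hr)).mul_left C
  have hsum : Summable fun n => ‖v n / r ^ (n + 1)‖ := by
    refine .of_nonneg_of_le (fun _ => norm_nonneg _) (fun n => ?_)
      (hgeom.add ((summable_nat_add_iff 1).mpr hgeom))
    rw [htel]
    exact (norm_sub_le _ _).trans (add_le_add (hbound n) (hbound (n + 1)))
  have hlim : Tendsto (fun n => w n / r ^ n) atTop (𝓝 0) := by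
    refine squeeze_zero_norm hbound ?_
    simpa using (tendsto_pow_atTop_nhds_zero_of_lt_one (by positivity)
      (inv_lt_one_of_one_lt₀ hr)).const_mul C
  rw [hasSum_iff_tendsto_nat_of_summable_norm hsum]
  simp_rw [htel, Finset.sum_range_sub']
  simpa using hlim.const_sub (w 0)

theorem hasSum_div_pow_of_even_odd {K : Type*} [Field K] [TopologicalSpace K]
    [IsTopologicalRing K] {q x y : K} (hq : q ≠ 0) {f : ℕ → K}
    (hy : HasSum (fun j => f (2 * j) / (q ^ 2) ^ (j + 1)) y)
    (hx : HasSum (fun j => f (2 * j + 1) / (q ^ 2) ^ (j + 1)) x) :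
    HasSum (fun k => f k / q ^ (k + 1)) (q * y + x) := by
  refine HasSum.even_add_odd (f := fun k => f k / q ^ (k + 1)) ?_ ?_
  · refine (hy.mul_left q).congr_fun fun j => ?_
    rw [← pow_mul]
    field_simp
    ring
  · refine hx.congr_fun fun j => ?_
    rw [← pow_mul]
    ring

open Real in
theorem sq_lt_add_one_of_lt_goldenRatio {s : ℝ} (hs : 0 < s) (hsφ : s < goldenRatio) :
    s ^ 2 < s + 1 := by
  nlinarith [goldenRatio_add_goldenConj, goldenRatio_mul_goldenConj, goldenConj_neg]

theorem Bool.toNat_injective : Function.Injective Bool.toNat := by decide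

theorem Stream'.injective_interleave_toNat {ι : Type*} {f g : ι → Stream' Bool}
    (h : Function.Injective f ∨ Function.Injective g) :
    Function.Injective fun i k => ((g i ⋈ f i).get (k - 1)).toNat := by
  intro i i' hi
  have hfg : g i ⋈ f i = g i' ⋈ f i' :=
    Stream'.ext fun k => Bool.toNat_injective (by simpa using congrFun hi (k + 1))
  rcases h with hf | hg
  · refine hf ?_
    simpa [Stream'.tail_interleave, Stream'.even_interleave] using
      congrArg (fun s => Stream'.even (Stream'.tail s)) hfg
  · exact hg (by simpa [Stream'.even_interleave] using congrArg Stream'.even hfg)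

theorem Cardinal.mk_setOf_forall_le_one_le_continuum :
    Cardinal.mk {c : ℕ → ℕ | ∀ k, c k ≤ 1} ≤ Cardinal.continuum := by
  calc Cardinal.mk {c : ℕ → ℕ | ∀ k, c k ≤ 1} ≤ Cardinal.mk (ℕ → Bool) :=
        Cardinal.mk_le_of_injective (f := fun c k => decide (c.1 k = 1)) fun c c' h => by
          ext k
          have hk := congrFun h k
          simp only [decide_eq_decide] at hk
          have := c.2 k
          have := c'.2 k
          omega
    _ = Cardinal.continuum := by simp

section BranchingOrbit

variable {X D : Type*} (step : X → D → X) (choice : X → Bool → D) (IsBranch : X → Prop)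
  [DecidablePred IsBranch]

/-- The orbit of `x` under `y ↦ step y (choice y b)`, where the bit `b` is read from `ω` and a
new bit is used after each visit to a branch point; the second component counts the bits used. -/
def branchingOrbit (x : X) (ω : ℕ → Bool) : ℕ → X × ℕ
  | 0 => (x, 0)
  | n + 1 =>
    let y := branchingOrbit x ω n
    (step y.1 (choice y.1 (ω y.2)), if IsBranch y.1 then y.2 + 1 else y.2)

def branchingDigits (x : X) (ω : ℕ → Bool) (n : ℕ) : D :=
  choice (branchingOrbit step choice IsBranch x ω n).1
    (ω (branchingOrbit step choice IsBranch x ω n).2)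

variable {step choice IsBranch} {x : X} {ω ω' : ℕ → Bool}

theorem branchingOrbit_succ_fst (n : ℕ) :
    (branchingOrbit step choice IsBranch x ω (n + 1)).1 =
      step (branchingOrbit step choice IsBranch x ω n).1
        (branchingDigits step choice IsBranch x ω n) := rfl

theorem branchingOrbit_succ_snd (n : ℕ) :
    (branchingOrbit step choice IsBranch x ω (n + 1)).2 =
      if IsBranch (branchingOrbit step choice IsBranch x ω n).1 then
        (branchingOrbit step choice IsBranch x ω n).2 + 1
      else (branchingOrbit step choice IsBranch x ω n).2 := rfl

theorem branchingOrbit_fst_mem {S : Set X} (hS : ∀ y ∈ S, ∀ b, step y (choice y b) ∈ S)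
    (hx : x ∈ S) (ω : ℕ → Bool) (n : ℕ) :
    (branchingOrbit step choice IsBranch x ω n).1 ∈ S := by
  induction n with
  | zero => exact hx
  | succ n ih => exact hS _ ih _

theorem monotone_branchingOrbit_snd :
    Monotone fun n => (branchingOrbit step choice IsBranch x ω n).2 := by
  refine monotone_nat_of_le_succ fun n => ?_
  rw [branchingOrbit_succ_snd]
  split_ifs <;> omega

theorem exists_lt_branchingOrbit_snd
    (hvisit : ∀ N, ∃ n, N ≤ n ∧ IsBranch (branchingOrbit step choice IsBranch x ω n).1)
    (i : ℕ) : ∃ n, i < (branchingOrbit step choice IsBranch x ω n).2 := by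
  induction i with
  | zero =>
    obtain ⟨n, -, hn⟩ := hvisit 0
    exact ⟨n + 1, by simp [branchingOrbit_succ_snd, hn]⟩
  | succ i ih =>
    obtain ⟨N, hN⟩ := ih
    obtain ⟨n, hNn, hn⟩ := hvisit N
    have hmono : (branchingOrbit step choice IsBranch x ω N).2 ≤
        (branchingOrbit step choice IsBranch x ω n).2 := monotone_branchingOrbit_snd hNn
    refine ⟨n + 1, ?_⟩
    rw [branchingOrbit_succ_snd, if_pos hn]
    omega

theorem exists_branchingOrbit_snd_eq
    (hvisit : ∀ N, ∃ n, N ≤ n ∧ IsBranch (branchingOrbit step choice IsBranch x ω n).1)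
    (i : ℕ) :
    ∃ n, IsBranch (branchingOrbit step choice IsBranch x ω n).1 ∧
      (branchingOrbit step choice IsBranch x ω n).2 = i := by
  have hex := exists_lt_branchingOrbit_snd hvisit i
  obtain ⟨m, hm⟩ : ∃ m, Nat.find hex = m + 1 := Nat.exists_eq_succ_of_ne_zero fun h0 => by
    simpa [h0, branchingOrbit] using Nat.find_spec hex
  have hlt := Nat.find_spec hex
  have hle : ¬ i < (branchingOrbit step choice IsBranch x ω m).2 := Nat.find_min hex (by omega)
  rw [hm, branchingOrbit_succ_snd] at hlt
  split_ifs at hlt with hb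
  · exact ⟨m, hb, by omega⟩
  · omega

theorem branchingOrbit_eq_of_branchingDigits_eq
    (h : branchingDigits step choice IsBranch x ω = branchingDigits step choice IsBranch x ω') :
    branchingOrbit step choice IsBranch x ω = branchingOrbit step choice IsBranch x ω' := by
  funext n
  induction n with
  | zero => rfl
  | succ n ih =>
    refine Prod.ext ?_ ?_
    · rw [branchingOrbit_succ_fst, branchingOrbit_succ_fst, ih, congrFun h n]
    · rw [branchingOrbit_succ_snd, branchingOrbit_succ_snd, ih]

theorem branchingDigits_injective
    (hchoice : ∀ y, IsBranch y → choice y true ≠ choice y false)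
    (hvisit : ∀ ω N, ∃ n, N ≤ n ∧
      IsBranch (branchingOrbit step choice IsBranch x ω n).1) :
    Function.Injective (branchingDigits step choice IsBranch x) := by
  intro ω ω' h
  funext i
  obtain ⟨n, hb, hi⟩ := exists_branchingOrbit_snd_eq (hvisit ω) i
  have hn := congrFun h n
  rw [branchingDigits, branchingDigits, ← branchingOrbit_eq_of_branchingDigits_eq h, hi] at hn
  have hne := hchoice _ hb
  cases hω : ω i <;> cases hω' : ω' i <;> simp only [hω, hω'] at hn
  exacts [rfl, (hne hn.symm).elim, (hne hn).elim, rfl]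

end BranchingOrbit

noncomputable section

namespace NegBase

variable (s : ℝ)

def lo : ℝ := -s / (s ^ 2 - 1)

def hi : ℝ := 1 / (s ^ 2 - 1)

def step (x : ℝ) (a : Bool) : ℝ := -s * x - a.toNat

def choice (x : ℝ) (b : Bool) : Bool :=
  if hi s ≤ -s * x then true else if -s * x ≤ lo s + 1 then false else b

def IsBranch (x : ℝ) : Prop := lo s + 1 < -s * x ∧ -s * x < hi s

instance : DecidablePred (IsBranch s) := fun _ => inferInstanceAs (Decidable (_ ∧ _))

def digits (x : ℝ) : (ℕ → Bool) → Stream' Bool :=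
  branchingDigits (step s) (choice s) (IsBranch s) x

variable {s}

theorem mul_hi (hs : 1 < s) : s * hi s = -lo s := by
  have : s ^ 2 - 1 ≠ 0 := by nlinarith
  simp only [hi, lo]
  field_simp

theorem mul_lo (hs : 1 < s) : s * lo s = -(hi s + 1) := by
  have : s ^ 2 - 1 ≠ 0 := by nlinarith
  simp only [hi, lo]
  field_simp
  ring

theorem lo_add_lt_hi (hs : 1 < s) (hgold : s ^ 2 < s + 1) : lo s + s < hi s := by
  have h : 0 < s ^ 2 - 1 := by nlinarith
  simp only [hi, lo]
  rw [div_add' _ _ _ h.ne', div_lt_div_iff_of_pos_right h]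
  nlinarith

theorem step_choice_mem_Icc (hs : 1 < s) (hgold : s ^ 2 < s + 1) {x : ℝ}
    (hx : x ∈ Icc (lo s) (hi s)) (b : Bool) : step s x (choice s x b) ∈ Icc (lo s) (hi s) := by
  have := mul_hi hs
  have := mul_lo hs
  have := lo_add_lt_hi hs hgold
  have hu : -s * x ∈ Icc (lo s) (hi s + 1) := ⟨by nlinarith [hx.2], by nlinarith [hx.1]⟩
  unfold step choice
  split_ifs <;> cases b <;>
    simp only [Bool.toNat_true, Bool.toNat_false, Nat.cast_one, Nat.cast_zero, sub_zero,
      mem_Icc] <;>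
    constructor <;> linarith [hu.1, hu.2]

theorem step_choice_mem_Ioo (hs : 1 < s) (hgold : s ^ 2 < s + 1) {x : ℝ}
    (hx : x ∈ Ioo (lo s) (hi s)) (b : Bool) : step s x (choice s x b) ∈ Ioo (lo s) (hi s) := by
  have := mul_hi hs
  have := mul_lo hs
  have := lo_add_lt_hi hs hgold
  have hu : -s * x ∈ Ioo (lo s) (hi s + 1) := ⟨by nlinarith [hx.2], by nlinarith [hx.1]⟩
  unfold step choice
  split_ifs <;> cases b <;>
    simp only [Bool.toNat_true, Bool.toNat_false, Nat.cast_one, Nat.cast_zero, sub_zero,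
      mem_Ioo] <;>
    constructor <;> linarith [hu.1, hu.2]

theorem mul_min_le_of_not_isBranch (hs : 1 < s) (hgold : s ^ 2 < s + 1) {x : ℝ} (b : Bool)
    (hx : ¬ IsBranch s x) (hx' : ¬ IsBranch s (step s x (choice s x b))) :
    s * min (x - lo s) (hi s - x) ≤
      min (step s x (choice s x b) - lo s) (hi s - step s x (choice s x b)) := by
  have := mul_hi hs
  have := mul_lo hs
  have := lo_add_lt_hi hs hgold
  unfold IsBranch at hx hx'
  unfold choice at hx' ⊢
  split_ifs at hx' ⊢ with h1 h2
  · simp only [step, Bool.toNat_true, Nat.cast_one] at hx' ⊢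
    have hmin : s * min (x - lo s) (hi s - x) ≤ s * (x - lo s) :=
      mul_le_mul_of_nonneg_left (min_le_left _ _) (by linarith)
    have : s * (s * x) ≤ lo s := by nlinarith
    have : s * (s * x) + s ≤ lo s + 1 := by
      by_contra!
      exact hx' ⟨by nlinarith, by nlinarith⟩
    refine le_min ?_ ?_ <;> nlinarith
  · simp only [step, Bool.toNat_false, Nat.cast_zero, sub_zero] at hx' ⊢
    have hmin : s * min (x - lo s) (hi s - x) ≤ s * (hi s - x) :=
      mul_le_mul_of_nonneg_left (min_le_right _ _) (by linarith)
    have : hi s + 1 - s ≤ s * (s * x) := by nlinarith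
    have : hi s ≤ s * (s * x) := by
      by_contra!
      exact hx' ⟨by nlinarith, by nlinarith⟩
    refine le_min ?_ ?_ <;> nlinarith
  · exact absurd ⟨by linarith, by linarith⟩ hx

theorem exists_isBranch (hs : 1 < s) (hgold : s ^ 2 < s + 1) {w : ℕ → ℝ} (bits : ℕ → Bool)
    (hw : ∀ n, w (n + 1) = step s (w n) (choice s (w n) (bits n)))
    (h0 : w 0 ∈ Ioo (lo s) (hi s)) : ∃ n, IsBranch s (w n) := by
  by_contra! hnot
  set g : ℝ → ℝ := fun x => min (x - lo s) (hi s - x)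
  have hgrow : ∀ n, s ^ n * g (w 0) ≤ g (w n) := by
    intro n
    induction n with
    | zero => simp
    | succ n ih =>
      calc s ^ (n + 1) * g (w 0) = s * (s ^ n * g (w 0)) := by ring
        _ ≤ s * g (w n) := by gcongr
        _ ≤ g (w (n + 1)) := by
          rw [hw]
          exact mul_min_le_of_not_isBranch hs hgold _ (hnot n) (hw n ▸ hnot (n + 1))
  have hg0 : 0 < g (w 0) := lt_min (by linarith [h0.1]) (by linarith [h0.2])
  obtain ⟨n, hn⟩ := pow_unbounded_of_one_lt ((hi s - lo s) / g (w 0)) hs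
  rw [div_lt_iff₀ hg0] at hn
  have hbound : 2 * g (w n) ≤ hi s - lo s := by
    linarith [min_le_left (w n - lo s) (hi s - w n), min_le_right (w n - lo s) (hi s - w n)]
  linarith [hgrow n, mul_pos (pow_pos (one_pos.trans hs) n) hg0]

theorem hasSum_digits (hs : 1 < s) (hgold : s ^ 2 < s + 1) {x : ℝ}
    (hx : x ∈ Icc (lo s) (hi s)) (ω : ℕ → Bool) :
    HasSum (fun n => (((digits s x ω).get n).toNat : ℝ) / (-s) ^ (n + 1)) x := by
  have hmem := branchingOrbit_fst_mem (IsBranch := IsBranch s)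
    (fun y hy b => step_choice_mem_Icc hs hgold hy b) hx ω
  refine hasSum_div_pow_of_remainders (r := -s) ?_ (fun n => branchingOrbit_succ_fst n)
    (fun n => abs_le_max_abs_abs (hmem n).1 (hmem n).2)
  rw [Real.norm_eq_abs, abs_neg, abs_of_pos (by linarith)]
  exact hs

theorem digits_injective (hs : 1 < s) (hgold : s ^ 2 < s + 1) {x : ℝ}
    (hx : x ∈ Ioo (lo s) (hi s)) : Function.Injective (digits s x) := by
  refine branchingDigits_injective (fun y hy => ?_) fun ω N => ?_
  · simp only [choice, if_neg (not_le.mpr hy.2), if_neg (not_le.mpr hy.1)]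
    decide
  · have hmem := branchingOrbit_fst_mem (IsBranch := IsBranch s)
      (fun y hy b => step_choice_mem_Ioo hs hgold hy b) hx ω N
    obtain ⟨n, hn⟩ := exists_isBranch hs hgold
      (w := fun n => (branchingOrbit (step s) (choice s) (IsBranch s) x ω (N + n)).1)
      (fun n => ω (branchingOrbit (step s) (choice s) (IsBranch s) x ω (N + n)).2)
      (fun n => rfl) hmem
    exact ⟨N + n, by omega, hn⟩

theorem mem_of_mem_rectangle {p : ℝ} (hp : 0 < p) {z : ℂ}
    (hre : z.re ∈ Icc (-p ^ 2 / (p ^ 4 - 1)) (1 / (p ^ 4 - 1)))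
    (him : z.im ∈ Icc (-p ^ 3 / (p ^ 4 - 1)) (p / (p ^ 4 - 1)))
    (hvertex : ¬ ((z.re = -p ^ 2 / (p ^ 4 - 1) ∨ z.re = 1 / (p ^ 4 - 1)) ∧
        (z.im = -p ^ 3 / (p ^ 4 - 1) ∨ z.im = p / (p ^ 4 - 1)))) :
    z.re ∈ Icc (lo (p ^ 2)) (hi (p ^ 2)) ∧ z.im / p ∈ Icc (lo (p ^ 2)) (hi (p ^ 2)) ∧
      (z.re ∈ Ioo (lo (p ^ 2)) (hi (p ^ 2)) ∨ z.im / p ∈ Ioo (lo (p ^ 2)) (hi (p ^ 2))) := by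
  have hlo : -p ^ 2 / (p ^ 4 - 1) = lo (p ^ 2) := by rw [lo]; ring
  have hhi : 1 / (p ^ 4 - 1) = hi (p ^ 2) := by rw [hi]; ring
  have hlo' : -p ^ 3 / (p ^ 4 - 1) = p * lo (p ^ 2) := by rw [lo]; ring
  have hhi' : p / (p ^ 4 - 1) = p * hi (p ^ 2) := by rw [hi]; ring
  have hzy : z.im = p * (z.im / p) := (mul_div_cancel₀ _ hp.ne').symm
  rw [hlo, hhi] at hre
  rw [hlo', hhi', hzy, mem_Icc, mul_le_mul_iff_right₀ hp, mul_le_mul_iff_right₀ hp,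
    ← mem_Icc] at him
  rw [hlo, hhi, hlo', hhi', hzy, mul_right_inj' hp.ne', mul_right_inj' hp.ne'] at hvertex
  have := eq_endpoints_or_mem_Ioo_of_mem_Icc hre
  have := eq_endpoints_or_mem_Ioo_of_mem_Icc him
  exact ⟨hre, him, by tauto⟩

end NegBase

end

-- `IsExpansionC` ignores the digit `c 0`, so the truncation of `k - 1` at `k = 0` is harmless.
open Complex in
theorem isExpansionC_of_hasSum_re_im {p : ℝ} (hp : p ≠ 0) {z : ℂ} {a b : Stream' Bool}
    (hre : HasSum (fun j => ((a.get j).toNat : ℝ) / (-p ^ 2) ^ (j + 1)) z.re)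
    (him : HasSum (fun j => ((b.get j).toNat : ℝ) / (-p ^ 2) ^ (j + 1)) (z.im / p)) :
    IsExpansionC (I * p) z fun k => ((b ⋈ a).get (k - 1)).toNat := by
  have hq : (I * p) ^ 2 = ((-p ^ 2 : ℝ) : ℂ) := by
    push_cast
    rw [mul_pow, I_sq]
    ring
  have hsum := hasSum_div_pow_of_even_odd (f := fun k => (((b ⋈ a).get k).toNat : ℂ))
    (mul_ne_zero I_ne_zero (ofReal_ne_zero.mpr hp))
    ((hasSum_ofReal.mpr him).congr_fun fun j => by
      rw [Stream'.get_interleave_left, hq]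
      push_cast
      rfl)
    ((hasSum_ofReal.mpr hre).congr_fun fun j => by
      rw [Stream'.get_interleave_right, hq]
      push_cast
      rfl)
  have hz : I * p * ((z.im / p : ℝ) : ℂ) + z.re = z := by
    apply Complex.ext <;> simp [mul_div_cancel₀ _ hp]
  refine ⟨fun k => Bool.toNat_le _, ?_⟩
  simpa only [Nat.add_sub_cancel, hz] using hsum

theorem continuum_expansions_imaginary_base (p : ℝ) (hp1 : 1 < p)
    (hp2 : p < Real.sqrt ((1 + Real.sqrt 5) / 2)) (q : ℂ) (hq : q = Complex.I * p)
    (z : ℂ)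
    (hre : z.re ∈ Set.Icc (-p ^ 2 / (p ^ 4 - 1)) (1 / (p ^ 4 - 1)))
    (him : z.im ∈ Set.Icc (-p ^ 3 / (p ^ 4 - 1)) (p / (p ^ 4 - 1)))
    (hvertex : ¬ ((z.re = -p ^ 2 / (p ^ 4 - 1) ∨ z.re = 1 / (p ^ 4 - 1)) ∧
        (z.im = -p ^ 3 / (p ^ 4 - 1) ∨ z.im = p / (p ^ 4 - 1)))) :
    Cardinal.mk {c : ℕ → ℕ | IsExpansionC q z c} = Cardinal.continuum := by
  have hp0 : 0 < p := by linarith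
  have hs : 1 < p ^ 2 := by nlinarith
  have hgold : (p ^ 2) ^ 2 < p ^ 2 + 1 :=
    sq_lt_add_one_of_lt_goldenRatio (by positivity) ((Real.lt_sqrt hp0.le).mp hp2)
  obtain ⟨hx, hy, hint⟩ := NegBase.mem_of_mem_rectangle hp0 hre him hvertex
  have hinj := Stream'.injective_interleave_toNat
    (hint.imp (NegBase.digits_injective hs hgold) (NegBase.digits_injective hs hgold))
  let E (ω : ℕ → Bool) : {c : ℕ → ℕ | IsExpansionC q z c} :=
    ⟨_, hq ▸ isExpansionC_of_hasSum_re_im hp0.ne' (NegBase.hasSum_digits hs hgold hx ω)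
      (NegBase.hasSum_digits hs hgold hy ω)⟩
  refine le_antisymm ((Cardinal.mk_le_mk_of_subset fun c hc => hc.1).trans
    Cardinal.mk_setOf_forall_le_one_le_continuum) ?_
  calc Cardinal.continuum = Cardinal.mk (ℕ → Bool) := by simp
    _ ≤ _ := Cardinal.mk_le_of_injective (f := E) fun ω ω' h => hinj (congrArg Subtype.val h)
end

section
/- Let ω ∈ ℂ with |ω| = 1 and ω⁴ ≠ 1, and let R > 0. Then there exists ε > 0 such that for all real p with 1 < p < 1 + ε, every complex z with |z| ≤ R has continuum many expansions in base q = pω with digits {0,1}. -/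
/-!
Write `q = p ω`. Expansions are produced by an automaton on remainders `r ↦ q ^ m * r - d`. While
`‖r‖ < 2`, both digits `d` keep `q * r - d` in a fixed ball of radius `C`, so such a step can read
one free bit. Since `ω ≠ ±1`, every `r` is turned by some `ω ^ k`, `k ≤ N`, into the sector
`|arg| ≤ π/3`; once `p ^ (2 (N + 1)) ≤ 1 + 1 / (4 C)`, a large `r` is then sent by
`r ↦ q ^ (k + 1) * r - 1` to a remainder with `‖·‖ ^ 2` smaller by `1/2`. Hence the remainders
stay bounded, so the digits form an expansion, every free bit is eventually read, and distinct bit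
streams yield distinct expansions.
-/

open Real Filter Topology

lemma summable_digits {q : ℂ} (hq : 1 < ‖q‖) {c : ℕ → ℕ} (hc : ∀ k, c k ≤ 1) :
    Summable fun k : ℕ => (c (k + 1) : ℂ) / q ^ (k + 1) := by
  have hq0 : 0 < ‖q‖ := one_pos.trans hq
  refine Summable.of_norm_bounded (g := fun k : ℕ => ‖q‖⁻¹ ^ (k + 1))
    ((summable_geometric_of_lt_one (by positivity) (inv_lt_one_of_one_lt₀ hq)).comp_injective
      (add_left_injective 1)) fun k => ?_
  rw [norm_div, norm_pow, inv_pow, div_eq_mul_inv, Complex.norm_natCast]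
  exact mul_le_of_le_one_left (by positivity) (by exact_mod_cast hc (k + 1))

def blockStart (L : ℕ → ℕ) (n : ℕ) : ℕ := ∑ i ∈ Finset.range n, L i

open Classical in
/-- The digit sequence made of consecutive blocks, the `n`-th of which consists of `L n - 1`
zeros followed by the digit `d n`, so that it ends at position `blockStart L (n + 1)`. -/
noncomputable def concatDigits (L d : ℕ → ℕ) (j : ℕ) : ℕ :=
  if h : ∃ n, blockStart L (n + 1) = j then d (Nat.find h) else 0

section Blocks

variable {L : ℕ → ℕ} (hL : ∀ n, 0 < L n) (d : ℕ → ℕ)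
include hL

lemma blockStart_strictMono : StrictMono (blockStart L) :=
  strictMono_nat_of_lt_succ fun n => by
    simpa [blockStart, Finset.sum_range_succ] using hL n

lemma concatDigits_blockStart (n : ℕ) : concatDigits L d (blockStart L (n + 1)) = d n := by
  have h : ∃ m, blockStart L (m + 1) = blockStart L (n + 1) := ⟨n, rfl⟩
  rw [concatDigits, dif_pos h]
  congr
  simpa using (blockStart_strictMono hL).injective (Nat.find_spec h)

lemma concatDigits_eq_zero {n j : ℕ} (h₁ : blockStart L n < j) (h₂ : j < blockStart L (n + 1)) :
    concatDigits L d j = 0 := by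
  rw [concatDigits, dif_neg]
  rintro ⟨m, rfl⟩
  have hmono := blockStart_strictMono hL
  rcases Nat.lt_or_ge m n with hmn | hmn
  · exact (hmono.monotone (Nat.succ_le_of_lt hmn)).not_gt h₁
  · exact (hmono.monotone (Nat.succ_le_succ hmn)).not_gt h₂

lemma sum_concatDigits {q : ℂ} (hq : q ≠ 0) {r : ℕ → ℂ}
    (hr : ∀ n, r (n + 1) = q ^ L n * r n - d n) (n : ℕ) :
    ∑ k ∈ Finset.range (blockStart L n), (concatDigits L d (k + 1) : ℂ) / q ^ (k + 1)
      = r 0 - r n / q ^ blockStart L n := by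
  induction n with
  | zero => simp [blockStart]
  | succ n ih =>
    obtain ⟨m, hm⟩ := Nat.exists_eq_add_one_of_ne_zero (hL n).ne'
    have hstart : blockStart L (n + 1) = blockStart L n + L n := Finset.sum_range_succ _ _
    have hblock : ∑ i ∈ Finset.range (L n),
        (concatDigits L d (blockStart L n + i + 1) : ℂ) / q ^ (blockStart L n + i + 1)
          = d n / q ^ blockStart L (n + 1) := by
      rw [hm, Finset.sum_range_succ, Finset.sum_eq_zero, zero_add, show blockStart L n + m + 1
        = blockStart L (n + 1) by omega, concatDigits_blockStart hL]
      intro i hi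
      rw [concatDigits_eq_zero hL d (n := n) (by omega) (by rw [Finset.mem_range] at hi; omega)]
      simp
    rw [hstart, Finset.sum_range_add, ih, hblock, hstart, hr, pow_add]
    field_simp
    ring

theorem isExpansionC_concatDigits {q : ℂ} (hq : 1 < ‖q‖) (hd : ∀ n, d n ≤ 1) {r : ℕ → ℂ}
    (hr : ∀ n, r (n + 1) = q ^ L n * r n - d n) {C : ℝ} (hC : ∀ n, ‖r n‖ ≤ C) :
    IsExpansionC q (r 0) (concatDigits L d) := by
  have hq0 : 0 < ‖q‖ := one_pos.trans hq
  have hdig : ∀ j, concatDigits L d j ≤ 1 := fun j => by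
    unfold concatDigits; split
    · exact hd _
    · exact zero_le_one
  refine ⟨hdig, ?_⟩
  have hsum := summable_digits hq hdig
  have htail : Tendsto (fun n => r n / q ^ blockStart L n) atTop (𝓝 0) := by
    have hpow : Tendsto (fun n => ‖q‖⁻¹ ^ blockStart L n) atTop (𝓝 0) :=
      (tendsto_pow_atTop_nhds_zero_of_lt_one (by positivity) (inv_lt_one_of_one_lt₀ hq)).comp
        (blockStart_strictMono hL).tendsto_atTop
    refine squeeze_zero_norm (fun n => ?_) (by simpa using hpow.const_mul C)
    rw [norm_div, norm_pow, div_eq_mul_inv, ← inv_pow]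
    exact mul_le_mul_of_nonneg_right (hC n) (by positivity)
  have hlim := hsum.hasSum.tendsto_sum_nat.comp (blockStart_strictMono hL).tendsto_atTop
  simp only [Function.comp_def, sum_concatDigits hL d (norm_pos_iff.1 hq0) hr] at hlim
  have hz : ∑' k, (concatDigits L d (k + 1) : ℂ) / q ^ (k + 1) = r 0 :=
    tendsto_nhds_unique hlim (by simpa using tendsto_const_nhds.sub htail)
  exact hz ▸ hsum.hasSum

end Blocks

/-- Remainders of norm `< 2` may take either digit and stay in the ball of radius `C`; larger
ones are pulled back by a block of `κ r` zeros followed by a one, which lowers `‖r‖ ^ 2`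
by `1/2`. -/
structure ExpansionScheme (q : ℂ) (κ : ℂ → ℕ) (C : ℝ) : Prop where
  one_lt_norm : 1 < ‖q‖
  norm_mul_sub_le : ∀ r : ℂ, ‖r‖ < 2 → ∀ b : Bool, ‖q * r - b.toNat‖ ≤ C
  sq_norm_pow_mul_sub_one_le :
    ∀ r : ℂ, 2 ≤ ‖r‖ → ‖r‖ ≤ C → ‖q ^ (κ r + 1) * r - 1‖ ^ 2 ≤ ‖r‖ ^ 2 - 1 / 2

namespace ExpansionScheme

section Automaton

variable (q : ℂ) (κ : ℂ → ℕ) (z : ℂ) (t : ℕ → Bool)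

/-- A state is a remainder together with the number of bits of `t` read so far. -/
noncomputable def nextState (s : ℂ × ℕ) : ℂ × ℕ :=
  if ‖s.1‖ < 2 then (q * s.1 - (t s.2).toNat, s.2 + 1) else (q ^ (κ s.1 + 1) * s.1 - 1, s.2)

noncomputable def state (n : ℕ) : ℂ × ℕ := (nextState q κ t)^[n] (z, 0)

noncomputable def blockLength (r : ℂ) : ℕ := if ‖r‖ < 2 then 1 else κ r + 1

noncomputable def blockDigit (s : ℂ × ℕ) : ℕ := if ‖s.1‖ < 2 then (t s.2).toNat else 1

noncomputable def digits : ℕ → ℕ :=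
  concatDigits (fun n => blockLength κ (state q κ z t n).1)
    (fun n => blockDigit t (state q κ z t n))

lemma blockLength_pos (r : ℂ) : 0 < blockLength κ r := by
  unfold blockLength; split_ifs <;> omega

lemma blockDigit_le_one (s : ℂ × ℕ) : blockDigit t s ≤ 1 := by
  unfold blockDigit; split_ifs
  exacts [Bool.toNat_le _, le_rfl]

lemma state_succ (n : ℕ) : state q κ z t (n + 1) = nextState q κ t (state q κ z t n) :=
  Function.iterate_succ_apply' _ _ _

lemma state_succ_fst (n : ℕ) :
    (state q κ z t (n + 1)).1 = q ^ blockLength κ (state q κ z t n).1 * (state q κ z t n).1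
      - blockDigit t (state q κ z t n) := by
  rw [state_succ, nextState, blockLength, blockDigit]
  split_ifs <;> simp

lemma state_succ_snd (n : ℕ) :
    (state q κ z t (n + 1)).2
      = if ‖(state q κ z t n).1‖ < 2 then (state q κ z t n).2 + 1 else (state q κ z t n).2 := by
  rw [state_succ, nextState]
  split_ifs <;> rfl

lemma state_snd_mono : Monotone fun n => (state q κ z t n).2 :=
  monotone_nat_of_le_succ fun n => by rw [state_succ_snd]; split_ifs <;> omega

lemma state_congr {t' : ℕ → Bool} {b : ℕ} (ht : ∀ i < b, t i = t' i) {n : ℕ}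
    (hn : (state q κ z t n).2 ≤ b) : state q κ z t' n = state q κ z t n := by
  induction n with
  | zero => rfl
  | succ n ih =>
    have hle := state_snd_mono q κ z t n.le_succ
    rw [state_succ, state_succ, ih (hle.trans hn), nextState, nextState]
    split_ifs with hsmall
    · rw [state_succ_snd, if_pos hsmall] at hn
      rw [ht _ (by omega)]
    · rfl

end Automaton

variable {q : ℂ} {κ : ℂ → ℕ} {C : ℝ} (S : ExpansionScheme q κ C) {z : ℂ} (hz : ‖z‖ ≤ C)
  (t : ℕ → Bool)
include S hz

lemma norm_state_le (n : ℕ) : ‖(state q κ z t n).1‖ ≤ C := by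
  induction n with
  | zero => exact hz
  | succ n ih =>
    rw [state_succ, nextState]
    split_ifs with hsmall
    · exact S.norm_mul_sub_le _ hsmall _
    · have := S.sq_norm_pow_mul_sub_one_le _ (not_lt.1 hsmall) ih
      exact (pow_le_pow_iff_left₀ (norm_nonneg _) (norm_nonneg _) two_ne_zero).1
        (by linarith) |>.trans ih

lemma exists_state_snd_eq_of_norm_lt (n : ℕ) :
    ∃ m, (state q κ z t m).2 = (state q κ z t n).2 ∧ ‖(state q κ z t m).1‖ < 2 := by
  -- every block that reads no bit lowers `‖r‖ ^ 2` by `1/2`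
  suffices h : ∀ k : ℕ, ∀ n, ‖(state q κ z t n).1‖ ^ 2 ≤ k / 2 →
      ∃ m, (state q κ z t m).2 = (state q κ z t n).2 ∧ ‖(state q κ z t m).1‖ < 2 by
    refine h ⌈2 * C ^ 2⌉₊ n ?_
    have := norm_state_le S hz t n
    have := Nat.le_ceil (2 * C ^ 2)
    nlinarith [norm_nonneg (state q κ z t n).1]
  intro k
  induction k with
  | zero =>
    intro n hn
    exact ⟨n, rfl, by nlinarith [norm_nonneg (state q κ z t n).1]⟩
  | succ k ih =>
    intro n hn
    by_cases hsmall : ‖(state q κ z t n).1‖ < 2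
    · exact ⟨n, rfl, hsmall⟩
    · have hdesc := S.sq_norm_pow_mul_sub_one_le _ (not_lt.1 hsmall) (norm_state_le S hz t n)
      obtain ⟨m, hm, hsm⟩ := ih (n + 1) (by
        rw [state_succ, nextState, if_neg hsmall]
        push_cast at hn
        linarith)
      refine ⟨m, ?_, hsm⟩
      rw [hm, state_succ_snd, if_neg hsmall]

lemma exists_state_snd_eq (b : ℕ) :
    ∃ n, (state q κ z t n).2 = b ∧ ‖(state q κ z t n).1‖ < 2 := by
  induction b with
  | zero => exact exists_state_snd_eq_of_norm_lt S hz t 0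
  | succ b ih =>
    obtain ⟨n, hb, hsmall⟩ := ih
    obtain ⟨m, hm, hsm⟩ := exists_state_snd_eq_of_norm_lt S hz t (n + 1)
    exact ⟨m, by rw [hm, state_succ_snd, if_pos hsmall, hb], hsm⟩

theorem isExpansionC_digits : IsExpansionC q z (digits q κ z t) :=
  isExpansionC_concatDigits (fun _ => blockLength_pos κ _) _ S.one_lt_norm
    (fun _ => blockDigit_le_one t _)
    (state_succ_fst q κ z t) (norm_state_le S hz t)

theorem digits_injective : Function.Injective (digits q κ z) := by
  intro t t' heq
  by_contra hne
  -- the two runs coincide until the first bit `b` where `t` and `t'` differ is read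
  have hex : ∃ b, t b ≠ t' b := Function.ne_iff.1 hne
  obtain ⟨n, hb, hsmall⟩ := exists_state_snd_eq S hz t (Nat.find hex)
  have hagree : ∀ i ≤ n, state q κ z t' i = state q κ z t i := fun i hi =>
    state_congr q κ z t (fun j hj => not_not.1 (Nat.find_min hex hj))
      (hb ▸ state_snd_mono q κ z t hi)
  have hstart : blockStart (fun i => blockLength κ (state q κ z t' i).1) (n + 1)
      = blockStart (fun i => blockLength κ (state q κ z t i).1) (n + 1) :=
    Finset.sum_congr rfl fun i hi => by
      simp only [hagree i (Nat.lt_succ_iff.1 (Finset.mem_range.1 hi))]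
  have hdig : ∀ t₀ : ℕ → Bool, state q κ z t₀ n = state q κ z t n →
      digits q κ z t₀ (blockStart (fun i => blockLength κ (state q κ z t₀ i).1) (n + 1))
        = (t₀ (Nat.find hex)).toNat := fun t₀ h => by
    rw [digits, concatDigits_blockStart (fun _ => blockLength_pos κ _), h, blockDigit,
      if_pos hsmall, hb]
  have := hdig t rfl
  rw [heq, ← hstart, hdig t' (hagree n le_rfl)] at this
  have hfirst := Nat.find_spec hex
  revert this hfirst
  cases t (Nat.find hex) <;> cases t' (Nat.find hex) <;> simp

theorem mk_expansions_eq_continuum :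
    Cardinal.mk {c : ℕ → ℕ | IsExpansionC q z c} = Cardinal.continuum := by
  refine le_antisymm ((Cardinal.mk_set_le _).trans (by simp)) ?_
  calc Cardinal.continuum = Cardinal.mk (ℕ → Bool) := by simp
    _ ≤ _ := Cardinal.mk_le_of_injective
        (f := fun t => ⟨digits q κ z t, isExpansionC_digits S hz t⟩)
        fun t t' h => digits_injective S hz (congrArg Subtype.val h)

end ExpansionScheme

lemma exists_nat_cos_add_mul_ge_half {φ : ℝ} (hφ : 0 < φ) (hφ' : φ ≤ 2 * π / 3) (α : ℝ) :
    ∃ j ≤ ⌈2 * π / φ⌉₊, 1 / 2 ≤ cos (α + j * φ) := by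
  -- `d` is the distance from `α` up to the next point `-π/3 (mod 2π)`; `j` steps of `φ` cover it
  -- and overshoot by less than `φ ≤ 2π/3`.
  set d := toIcoMod two_pi_pos 0 (-(π / 3) - α)
  obtain ⟨hd0, hd⟩ : d ∈ Set.Ico 0 (0 + 2 * π) := toIcoMod_mem_Ico two_pi_pos 0 _
  have hperiod : -(π / 3) - α - d = toIcoDiv two_pi_pos 0 (-(π / 3) - α) * (2 * π) := by
    rw [← zsmul_eq_mul]; exact self_sub_toIcoMod two_pi_pos 0 _
  refine ⟨⌈d / φ⌉₊, Nat.ceil_mono (by gcongr; linarith), ?_⟩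
  have hlow : d ≤ ⌈d / φ⌉₊ * φ := (div_le_iff₀ hφ).1 (Nat.le_ceil _)
  have hup : ⌈d / φ⌉₊ * φ < d + φ := by
    have := Nat.ceil_lt_add_one (div_nonneg hd0 hφ.le)
    rwa [← lt_div_iff₀ hφ, add_div, div_self hφ.ne']
  have hcos : cos (α + ⌈d / φ⌉₊ * φ) = cos (⌈d / φ⌉₊ * φ - d - π / 3) := by
    rw [← Real.cos_add_int_mul_two_pi _ (toIcoDiv two_pi_pos 0 (-(π / 3) - α))]
    congr 1
    linarith
  rw [hcos, ← cos_abs, ← cos_pi_div_three]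
  exact cos_le_cos_of_nonneg_of_le_pi (abs_nonneg _) (by linarith [pi_pos])
    (abs_le.2 ⟨by linarith, by linarith⟩)

lemma exists_re_exp_pow_mul_ge {φ : ℝ} (hφ : 0 < φ) (hφ' : φ ≤ 2 * π / 3) (v : ℂ) :
    ∃ j ≤ ⌈2 * π / φ⌉₊, ‖v‖ / 2 ≤ (Complex.exp (φ * Complex.I) ^ j * v).re := by
  obtain ⟨j, hj, hcos⟩ := exists_nat_cos_add_mul_ge_half hφ hφ' v.arg
  refine ⟨j, hj, ?_⟩
  have : Complex.exp (φ * Complex.I) ^ j * v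
      = ‖v‖ * Complex.exp ((v.arg + j * φ : ℝ) * Complex.I) := by
    conv_lhs => rw [← Complex.norm_mul_exp_arg_mul_I v]
    rw [← Complex.exp_nat_mul, mul_left_comm, ← Complex.exp_add]
    push_cast; ring_nf
  rw [this, Complex.re_ofReal_mul, Complex.exp_ofReal_mul_I_re]
  nlinarith [norm_nonneg v]

lemma exists_re_pow_mul_ge_of_neg_half_le_re {w : ℂ} (hw : ‖w‖ = 1) (hw1 : w ≠ 1)
    (hre : -(1 / 2) ≤ w.re) : ∃ M, ∀ v : ℂ, ∃ j ≤ M, ‖v‖ / 2 ≤ (w ^ j * v).re := by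
  have hw0 : w ≠ 0 := by rintro rfl; simp at hw
  set φ := w.arg
  have hexp : Complex.exp (φ * Complex.I) = w := by
    simpa [hw] using Complex.norm_mul_exp_arg_mul_I w
  have hφ0 : φ ≠ 0 := fun h => hw1 (by rw [← hexp, h]; simp)
  have hφ : |φ| ≤ 2 * π / 3 := by
    by_contra! h
    have hcos : cos |φ| < cos (2 * π / 3) :=
      cos_lt_cos_of_nonneg_of_le_pi (by positivity)
        (abs_le.2 ⟨by linarith [Complex.neg_pi_lt_arg w], Complex.arg_le_pi w⟩) h
    rw [cos_abs, Complex.cos_arg hw0, hw, div_one,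
      show 2 * π / 3 = π - π / 3 by ring, cos_pi_sub, cos_pi_div_three] at hcos
    linarith
  refine ⟨⌈2 * π / |φ|⌉₊, fun v => ?_⟩
  rcases hφ0.lt_or_gt with hneg | hpos
  · -- conjugation reflects the rotation by `φ < 0` to one by `-φ > 0`
    obtain ⟨j, hj, hre⟩ := exists_re_exp_pow_mul_ge (neg_pos.2 hneg)
      (by rwa [abs_of_neg hneg] at hφ) ((starRingEnd ℂ) v)
    refine ⟨j, by rwa [abs_of_neg hneg], ?_⟩
    have : Complex.exp ((-φ : ℝ) * Complex.I) ^ j * (starRingEnd ℂ) v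
        = (starRingEnd ℂ) (w ^ j * v) := by
      rw [← hexp, map_mul, map_pow, ← Complex.exp_conj]
      simp
    rwa [this, Complex.conj_re, Complex.norm_conj] at hre
  · obtain ⟨j, hj, hre⟩ := exists_re_exp_pow_mul_ge hpos (by rwa [abs_of_pos hpos] at hφ) v
    exact ⟨j, by rwa [abs_of_pos hpos], by rwa [hexp] at hre⟩

theorem exists_re_pow_mul_ge {u : ℂ} (hu : ‖u‖ = 1) (hu2 : u ^ 2 ≠ 1) :
    ∃ N, ∀ v : ℂ, ∃ k ≤ N, ‖v‖ / 2 ≤ (u ^ k * v).re := by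
  by_cases hre : -(1 / 2) ≤ u.re
  · exact exists_re_pow_mul_ge_of_neg_half_le_re hu (by rintro rfl; simp at hu2) hre
  · have hsq := Complex.sq_norm u
    rw [hu, Complex.normSq_apply] at hsq
    obtain ⟨M, hM⟩ := exists_re_pow_mul_ge_of_neg_half_le_re (w := u ^ 2) (by simp [hu]) hu2
      (by rw [sq, Complex.mul_re]; nlinarith)
    refine ⟨2 * M, fun v => ?_⟩
    obtain ⟨j, hj, h⟩ := hM v
    exact ⟨2 * j, by omega, by rwa [pow_mul]⟩

lemma sq_norm_sub_one (w : ℂ) : ‖w - 1‖ ^ 2 = ‖w‖ ^ 2 - 2 * w.re + 1 := by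
  simp only [Complex.sq_norm, Complex.normSq_sub, map_one, mul_one]
  ring

lemma sq_norm_pow_mul_sub_one_le {ω : ℂ} (hω : ‖ω‖ = 1) {p C : ℝ} (hp : 1 ≤ p) {k : ℕ}
    (hpk : p ^ (2 * k) ≤ 1 + 1 / (4 * C)) {r : ℂ} (hr : 2 ≤ ‖r‖) (hrC : ‖r‖ ≤ C)
    (hre : ‖r‖ / 2 ≤ (ω ^ k * r).re) : ‖(p * ω) ^ k * r - 1‖ ^ 2 ≤ ‖r‖ ^ 2 - 1 / 2 := by
  have hC : 0 < C := by linarith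
  have hpk1 : 1 ≤ p ^ k := one_le_pow₀ hp
  have hnorm : ‖(p * ω) ^ k * r‖ = p ^ k * ‖r‖ := by
    rw [norm_mul, norm_pow, norm_mul, hω, Complex.norm_real, Real.norm_of_nonneg (by linarith),
      mul_one]
  have hre' : ((p * ω) ^ k * r).re = p ^ k * (ω ^ k * r).re := by
    rw [mul_pow, mul_assoc, ← Complex.ofReal_pow, Complex.re_ofReal_mul]
  have hsq : (p ^ k) ^ 2 * ‖r‖ ^ 2 ≤ ‖r‖ ^ 2 + ‖r‖ / 4 := by
    have h1 : ‖r‖ ^ 2 / (4 * C) ≤ ‖r‖ / 4 := by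
      rw [div_le_div_iff₀ (by positivity) (by norm_num)]; nlinarith
    calc (p ^ k) ^ 2 * ‖r‖ ^ 2 ≤ (1 + 1 / (4 * C)) * ‖r‖ ^ 2 := by
          rw [← pow_mul, mul_comm k]; gcongr
      _ ≤ ‖r‖ ^ 2 + ‖r‖ / 4 := by rw [add_mul, one_div_mul_eq_div]; linarith
  rw [sq_norm_sub_one, hnorm, hre', mul_pow]
  nlinarith

lemma exists_expansionScheme {ω : ℂ} (hω : ‖ω‖ = 1) (hω2 : ω ^ 2 ≠ 1) {C : ℝ} (hC : 4 ≤ C) :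
    ∃ κ : ℂ → ℕ, ∃ ε > 0, ∀ p : ℝ, 1 < p → p < 1 + ε → ExpansionScheme (p * ω) κ C := by
  obtain ⟨N, hN⟩ := exists_re_pow_mul_ge hω hω2
  choose κ hκN hκ using fun r => hN (ω * r)
  have hnear : ∀ᶠ p : ℝ in 𝓝 1, p < 3 / 2 ∧ p ^ (2 * (N + 1)) < 1 + 1 / (4 * C) :=
    (eventually_lt_nhds (by norm_num)).and <|
      ((continuous_pow (2 * (N + 1))).tendsto (1 : ℝ)).eventually_lt_const
        (by rw [one_pow, lt_add_iff_pos_right]; positivity)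
  obtain ⟨ε, hε, hball⟩ := Metric.eventually_nhds_iff.1 hnear
  refine ⟨κ, ε, hε, fun p hp1 hp2 => ?_⟩
  obtain ⟨hp32, hpN⟩ := hball (show dist p 1 < ε by rw [Real.dist_eq, abs_of_pos] <;> linarith)
  refine ⟨?_, fun r hr b => ?_, fun r hr hrC => ?_⟩
  · rwa [norm_mul, hω, mul_one, Complex.norm_real, Real.norm_of_nonneg (by linarith)]
  · calc ‖(p * ω : ℂ) * r - b.toNat‖ ≤ p * ‖r‖ + 1 := by
          refine (norm_sub_le _ _).trans (add_le_add ?_ ?_)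
          · rw [norm_mul, norm_mul, hω, mul_one, Complex.norm_real,
              Real.norm_of_nonneg (by linarith)]
          · simpa using Bool.toNat_le b
      _ ≤ C := by nlinarith [norm_nonneg r]
  · refine sq_norm_pow_mul_sub_one_le hω hp1.le ?_ hr hrC ?_
    · exact (pow_le_pow_right₀ hp1.le (by have := hκN r; omega)).trans hpN.le
    · have := hκ r
      rwa [norm_mul, hω, one_mul, ← mul_assoc, ← pow_succ] at this

theorem continuum_expansions_complex_base_general (ω : ℂ) (hω : ‖ω‖ = 1)
    (hω4 : ω ^ 4 ≠ 1) (R : ℝ) :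
    ∃ ε > 0, ∀ p : ℝ, 1 < p → p < 1 + ε →
      ∀ z : ℂ, ‖z‖ ≤ R →
        Cardinal.mk {c : ℕ → ℕ | IsExpansionC ((p : ℂ) * ω) z c} = Cardinal.continuum := by
  have hω2 : ω ^ 2 ≠ 1 := fun h => hω4 (by rw [show 4 = 2 * 2 from rfl, pow_mul, h, one_pow])
  obtain ⟨κ, ε, hε, hscheme⟩ := exists_expansionScheme hω hω2 (le_max_right R 4)
  exact ⟨ε, hε, fun p hp1 hp2 z hz =>
    (hscheme p hp1 hp2).mk_expansions_eq_continuum (hz.trans (le_max_left R 4))⟩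

theorem continuum_expansions_complex_base (ω : ℂ) (hω : ‖ω‖ = 1)
    (hω4 : ω ^ 4 ≠ 1) (R : ℝ) (hR : 0 < R) :
    ∃ ε > 0, ∀ p : ℝ, 1 < p → p < 1 + ε →
      ∀ z : ℂ, ‖z‖ ≤ R →
        Cardinal.mk {c : ℕ → ℕ | IsExpansionC ((p : ℂ) * ω) z c} = Cardinal.continuum :=
  continuum_expansions_complex_base_general ω hω hω4 R
end

section
/- Every interior point z of (p^m − 1)·J_q (with m ≥ 3, ω^m = 1, 1 < p ≤ 2^{1/m}, q = pω) can be written as z = ∑_{j=1}^m (pω)^{m-j} α_j with real numbers satisfying 0 < α_j < 1 for all j. -/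
/-!
Grouping the digits of `w = ∑ c_k q^{-k}` by their index mod `m`, and using that `q^m = R > 1` is
real, gives `(R - 1) w = ∑_j q^{m-1-j} β_j` with `β_j = (1 - R⁻¹) ∑_i c_{im+j+1} R^{-i} ∈ [0, 1]`.
So `(p^m - 1) J_q` lies in the image of the cube `[0,1]^m` under the linear map
`A β = ∑_j q^{m-1-j} β_j`. An interior point `z` of that image can be pushed slightly away from the
image `A c` of the centre of the cube: `z + s (z - A c) = A β` for some small `s > 0`, and then
`z = A ((β + s c) / (1 + s))`, whose coordinates lie strictly between `0` and `1`.
-/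

open Set Filter Topology

lemma exists_hasSum_mul_geometric_mem_Icc {d : ℕ → ℕ} (hd : ∀ i, d i ≤ 1) {r : ℝ}
    (hr0 : 0 ≤ r) (hr1 : r < 1) :
    ∃ T ∈ Icc 0 (1 - r)⁻¹, HasSum (fun i => (d i : ℝ) * r ^ i) T := by
  have hle : ∀ i, (d i : ℝ) * r ^ i ≤ r ^ i := fun i =>
    mul_le_of_le_one_left (pow_nonneg hr0 i) (by exact_mod_cast hd i)
  have hnn : ∀ i, 0 ≤ (d i : ℝ) * r ^ i := fun i => by positivity
  have hs := (summable_geometric_of_lt_one hr0 hr1).of_nonneg_of_le hnn hle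
  exact ⟨_, ⟨tsum_nonneg hnn, hasSum_le hle hs.hasSum (hasSum_geometric_of_lt_one hr0 hr1)⟩,
    hs.hasSum⟩

lemma hasSum_div_pow_of_pow_eq_ofReal {q : ℂ} (hq : q ≠ 0) {m : ℕ} {R : ℝ} (hqm : q ^ m = R)
    (d : ℕ → ℕ) (j : ℕ) {T : ℝ} (hT : HasSum (fun i => (d i : ℝ) * R⁻¹ ^ i) T) :
    HasSum (fun i => (d i : ℂ) / q ^ (i * m + j + 1)) ((q ^ (j + 1))⁻¹ * T) := by
  have hR : (R : ℂ) ≠ 0 := hqm ▸ pow_ne_zero m hq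
  have hterm (i : ℕ) :
      (d i : ℂ) / q ^ (i * m + j + 1) = (q ^ (j + 1))⁻¹ * ((d i * R⁻¹ ^ i : ℝ) : ℂ) := by
    rw [show i * m + j + 1 = (j + 1) + m * i by ring, pow_add, pow_mul, hqm]
    push_cast
    rw [inv_pow]
    field_simp
  simpa only [hterm] using (Complex.hasSum_ofReal.mpr hT).mul_left (q ^ (j + 1))⁻¹

lemma sub_one_mul_mem_image_linearCombination_pi_Icc {q : ℂ} {m : ℕ} {R : ℝ} (hqm : q ^ m = R)
    (hR : 1 < R) {w : ℂ} (hw : w ∈ JC q) :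
    (q ^ m - 1) * w ∈
      Fintype.linearCombination ℝ (fun j : Fin m => q ^ (m - 1 - (j : ℕ))) ''
        univ.pi fun _ => Icc 0 1 := by
  obtain ⟨c, hc, hsum⟩ := hw
  have : NeZero m := ⟨by rintro rfl; rw [pow_zero] at hqm; norm_cast at hqm; linarith⟩
  have hq : q ≠ 0 := by
    rintro rfl; rw [zero_pow NeZero.out] at hqm; norm_cast at hqm; linarith
  have hRinv : R⁻¹ < 1 := inv_lt_one_of_one_lt₀ hR
  choose T hT hTsum using fun j : Fin m =>
    exists_hasSum_mul_geometric_mem_Icc (d := fun i => c (i * m + j + 1)) (fun _ => hc _)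
      (inv_nonneg.mpr (by linarith)) hRinv
  let e : Fin m × ℕ ≃ ℕ := (Equiv.prodComm _ _).trans (Nat.divModEquiv m).symm
  have hblocks : HasSum (fun j : Fin m => (q ^ ((j : ℕ) + 1))⁻¹ * T j) w :=
    (e.hasSum_iff.mpr hsum).prod_fiberwise fun j =>
      hasSum_div_pow_of_pow_eq_ofReal hq hqm _ j (hTsum j)
  refine ⟨fun j => (1 - R⁻¹) * T j, fun j _ => ⟨?_, ?_⟩, ?_⟩
  · exact mul_nonneg (by linarith) (hT j).1
  · calc (1 - R⁻¹) * T j ≤ (1 - R⁻¹) * (1 - R⁻¹)⁻¹ :=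
          mul_le_mul_of_nonneg_left (hT j).2 (by linarith)
      _ = 1 := mul_inv_cancel₀ (by linarith)
  rw [← (hasSum_fintype _).unique hblocks, Fintype.linearCombination_apply, Finset.mul_sum]
  refine Finset.sum_congr rfl fun j _ => ?_
  have hsplit : q ^ (m - 1 - (j : ℕ)) * q ^ ((j : ℕ) + 1) = R := by
    rw [← pow_add, ← hqm]; congr 1; omega
  rw [hqm, Complex.real_smul]
  push_cast
  rw [← hsplit]
  field_simp

lemma mem_image_pi_Ioo_of_mem_interior_image_pi_Icc {ι E : Type*} [Fintype ι]
    [AddCommGroup E] [Module ℝ E] [TopologicalSpace E] [ContinuousAdd E] [ContinuousSMul ℝ E]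
    (A : (ι → ℝ) →ₗ[ℝ] E) {z : E} (hz : z ∈ interior (A '' univ.pi fun _ => Icc 0 1)) :
    z ∈ A '' univ.pi fun _ => Ioo 0 1 := by
  set c : ι → ℝ := fun _ => 1 / 2
  have hnear : ∀ᶠ t in 𝓝[>] (0 : ℝ), z + t • (z - A c) ∈ A '' univ.pi fun _ => Icc 0 1 := by
    have : Tendsto (fun t : ℝ => z + t • (z - A c)) (𝓝 0) (𝓝 z) := by
      simpa using ((continuous_id.smul continuous_const).const_add z).tendsto (0 : ℝ)
    exact (this.eventually (mem_interior_iff_mem_nhds.mp hz)).filter_mono nhdsWithin_le_nhds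
  obtain ⟨s, ⟨β, hβ, hAβ⟩, hs : 0 < s⟩ := (hnear.and self_mem_nhdsWithin).exists
  refine ⟨(1 + s)⁻¹ • (β + s • c), fun i _ => ?_, ?_⟩
  · obtain ⟨hβ0, hβ1⟩ := hβ i trivial
    simp only [Pi.smul_apply, Pi.add_apply, smul_eq_mul, c]
    constructor
    · positivity
    · rw [inv_mul_lt_iff₀ (by linarith)]; linarith
  · rw [map_smul, map_add, map_smul, hAβ,
      show z + s • (z - A c) + s • A c = (1 + s) • z by module, smul_smul,
      inv_mul_cancel₀ (by linarith), one_smul]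

theorem interior_point_representation_general (m : ℕ) (hm : 3 ≤ m) (ω : ℂ) (hω : ω ^ m = 1)
    (p : ℝ) (hp1 : 1 < p) (q : ℂ)
    (hq : q = (p : ℂ) * ω) (z : ℂ)
    (hz : z ∈ interior ((fun w => ((p : ℂ) ^ m - 1) * w) '' JC q)) :
    ∃ α : Fin m → ℝ, (∀ j, 0 < α j ∧ α j < 1) ∧
      z = ∑ j : Fin m, q ^ (m - 1 - (j : ℕ)) * (α j : ℂ) := by
  have hqm : q ^ m = ((p ^ m : ℝ) : ℂ) := by rw [hq, mul_pow, hω, mul_one, Complex.ofReal_pow]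
  set A := Fintype.linearCombination ℝ fun j : Fin m => q ^ (m - 1 - (j : ℕ))
  have hsub : (fun w => ((p : ℂ) ^ m - 1) * w) '' JC q ⊆ A '' univ.pi fun _ => Icc 0 1 := by
    rintro _ ⟨w, hw, rfl⟩
    simpa [hqm] using sub_one_mul_mem_image_linearCombination_pi_Icc hqm (one_lt_pow₀ hp1 (by omega)) hw
  obtain ⟨α, hα, rfl⟩ := mem_image_pi_Ioo_of_mem_interior_image_pi_Icc A (interior_mono hsub hz)
  refine ⟨α, fun j => hα j trivial, ?_⟩
  simp [A, Fintype.linearCombination_apply, Complex.real_smul, mul_comm]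

theorem interior_point_representation (m : ℕ) (hm : 3 ≤ m) (ω : ℂ) (hω : ω ^ m = 1)
    (p : ℝ) (hp1 : 1 < p) (hp2 : p ≤ (2 : ℝ) ^ ((1 : ℝ) / m)) (q : ℂ)
    (hq : q = (p : ℂ) * ω) (z : ℂ)
    (hz : z ∈ interior ((fun w => ((p : ℂ) ^ m - 1) * w) '' JC q)) :
    ∃ α : Fin m → ℝ, (∀ j, 0 < α j ∧ α j < 1) ∧
      z = ∑ j : Fin m, q ^ (m - 1 - (j : ℕ)) * (α j : ℂ) :=
  interior_point_representation_general m hm ω hω p hp1 q hq z hz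
end
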